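/- arXiv:2505.11931 — 10 statements merged into one kernel-verified Lean document; each statement's English description precedes it below -/
import Mathlib

section
/- Let m ≥ 1 and let f : ℝ^m → ℝ^m be C² and homogeneous of degree 5. Then for every θ ∈ ℝ^m there exist R > 0, C > 0 and a C² function Z : [R, ∞) → ℝ^m such that Z''(r) + (2/r) Z'(r) + f(Z(r)) = 0 for all r > R, and moreover |Z(r) − θ/r| ≤ C r^{−3} and |Z'(r) + θ/r²| ≤ C r^{−4} for all r ≥ R. -/
/-!
The Kelvin transform `Z r = r⁻¹ • v r⁻¹` maps radial solutions of `-Δu = f(u)` on `ℝ³` to radial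
solutions again because `5` is the critical exponent: with `t = r⁻¹` the homogeneity of `f` exactly
absorbs the factors of `r`. The asymptotics `Z r ≈ θ / r` at infinity become the initial conditions
`v 0 = θ`, `v' 0 = 0` at `t = 0`, where the equation `v'' + (2 / t) v' + f(v) = 0` is singular. Its
integral form `v = θ + duhamel (f ∘ v)` has a kernel of size `O(t)`, so on a short interval the
Picard map is a contraction of a ball around `θ` on which `f` is Lipschitz; the same kernel bounds
give `‖v t - θ‖ = O(t²)` and `‖v' t‖ = O(t)`, i.e. the `r⁻³` and `r⁻⁴` error terms.
-/

open Set Filter Topology Metric BoundedContinuousFunction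

theorem BoundedContinuousFunction.mem_closedBall_const_iff {E : Type*} [NormedAddCommGroup E]
    {u : ℝ →ᵇ E} {θ : E} {δ : ℝ} (hδ : 0 ≤ δ) :
    u ∈ closedBall (const ℝ θ) δ ↔ ∀ s, u s ∈ closedBall θ δ := by
  simp only [mem_closedBall, BoundedContinuousFunction.dist_le hδ, const_apply]

namespace RadialODE

variable {E : Type*} [NormedAddCommGroup E] [NormedSpace ℝ E]

theorem norm_integral_pow_smul_le {g : ℝ → E} {C : ℝ} (hg : ∀ s, ‖g s‖ ≤ C) (n : ℕ) (τ : ℝ) :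
    ‖∫ s in (0 : ℝ)..τ, s ^ n • g s‖ ≤ C * |τ| ^ (n + 1) := by
  have hC : 0 ≤ C := (norm_nonneg _).trans (hg 0)
  calc ‖∫ s in (0 : ℝ)..τ, s ^ n • g s‖ ≤ |τ| ^ n * C * |τ - 0| := by
        refine intervalIntegral.norm_integral_le_of_norm_le_const fun s hs => ?_
        have hsτ : |s| ≤ |τ| := by simpa using abs_sub_left_of_mem_uIcc (uIoc_subset_uIcc hs)
        rw [norm_smul, Real.norm_eq_abs, abs_pow]
        gcongr
        exact hg s
    _ = C * |τ| ^ (n + 1) := by rw [sub_zero]; ring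

/-- `θ + duhamel g` is the solution of `w'' + (2 / t) w' + g = 0`, `w 0 = θ`, `w' 0 = 0`,
obtained by variation of constants from the fundamental solutions `1` and `1 / t`. -/
noncomputable def duhamel (g : ℝ → E) (t : ℝ) : E :=
  t⁻¹ • (∫ s in (0 : ℝ)..t, s ^ 2 • g s) - ∫ s in (0 : ℝ)..t, s • g s

noncomputable def duhamelDeriv (g : ℝ → E) (t : ℝ) : E :=
  -((t ^ 2)⁻¹ • ∫ s in (0 : ℝ)..t, s ^ 2 • g s)

variable {g h : ℝ → E} {C : ℝ}

theorem norm_inv_smul_integral_sq_smul_le (hg : ∀ s, ‖g s‖ ≤ C) (t : ℝ) :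
    ‖t⁻¹ • ∫ s in (0 : ℝ)..t, s ^ 2 • g s‖ ≤ C * t ^ 2 := by
  rcases eq_or_ne t 0 with rfl | ht
  · simp
  calc ‖t⁻¹ • ∫ s in (0 : ℝ)..t, s ^ 2 • g s‖ ≤ |t|⁻¹ * (C * |t| ^ 3) := by
        rw [norm_smul, norm_inv, Real.norm_eq_abs]
        gcongr
        exact norm_integral_pow_smul_le hg 2 t
    _ = C * t ^ 2 := by
        have : |t| ≠ 0 := abs_ne_zero.mpr ht
        field_simp
        rw [sq_abs, mul_comm]

theorem norm_duhamel_le (hg : ∀ s, ‖g s‖ ≤ C) (t : ℝ) : ‖duhamel g t‖ ≤ 2 * C * t ^ 2 := by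
  have hA : ‖∫ s in (0 : ℝ)..t, s • g s‖ ≤ C * t ^ 2 := by
    simpa using norm_integral_pow_smul_le hg 1 t
  calc ‖duhamel g t‖ ≤ C * t ^ 2 + C * t ^ 2 :=
        (norm_sub_le _ _).trans (add_le_add (norm_inv_smul_integral_sq_smul_le hg t) hA)
    _ = 2 * C * t ^ 2 := by ring

theorem norm_duhamelDeriv_le (hg : ∀ s, ‖g s‖ ≤ C) {t : ℝ} (ht : 0 ≤ t) :
    ‖duhamelDeriv g t‖ ≤ C * t := by
  rcases ht.eq_or_lt with rfl | ht
  · simp [duhamelDeriv]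
  calc ‖duhamelDeriv g t‖ = t⁻¹ * ‖t⁻¹ • ∫ s in (0 : ℝ)..t, s ^ 2 • g s‖ := by
        rw [duhamelDeriv, norm_neg, norm_smul, norm_smul, norm_inv, norm_inv, norm_pow,
          Real.norm_of_nonneg ht.le, ← mul_assoc, ← mul_inv, sq]
    _ ≤ t⁻¹ * (C * t ^ 2) := by gcongr; exact norm_inv_smul_integral_sq_smul_le hg t
    _ = C * t := by field_simp

theorem duhamel_sub (hg : Continuous g) (hh : Continuous h) (t : ℝ) :
    duhamel g t - duhamel h t = duhamel (g - h) t := by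
  have hint : ∀ n : ℕ, ∀ k : ℝ → E, Continuous k →
      IntervalIntegrable (fun s => s ^ n • k s) MeasureTheory.volume 0 t :=
    fun n k hk => (by fun_prop : Continuous fun s : ℝ => s ^ n • k s).intervalIntegrable _ _
  have h1 := intervalIntegral.integral_sub (hint 1 g hg) (hint 1 h hh)
  have h2 := intervalIntegral.integral_sub (hint 2 g hg) (hint 2 h hh)
  simp only [pow_one] at h1
  simp only [duhamel, Pi.sub_apply, smul_sub, h1, h2]
  abel

theorem hasDerivAt_inv_pow (n : ℕ) {r : ℝ} (hr : r ≠ 0) :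
    HasDerivAt (fun ρ : ℝ => (ρ ^ n)⁻¹) (-(n * (r ^ (n + 1))⁻¹)) r := by
  refine ((hasDerivAt_pow n r).inv (pow_ne_zero n hr)).congr_deriv ?_
  rcases n with _ | n
  · simp
  · simp only [Nat.add_sub_cancel]
    field_simp
    ring

section Calculus

variable [CompleteSpace E]

theorem hasDerivAt_integral_pow_smul (hg : Continuous g) (n : ℕ) (t : ℝ) :
    HasDerivAt (fun τ => ∫ s in (0 : ℝ)..τ, s ^ n • g s) (t ^ n • g t) t :=
  ((by fun_prop : Continuous fun s : ℝ => s ^ n • g s).integral_hasStrictDerivAt 0 t).hasDerivAt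

theorem continuous_duhamel (hg : Continuous g) : Continuous (duhamel g) := by
  refine continuous_iff_continuousAt.mpr fun t => ContinuousAt.sub (f := fun τ =>
    τ⁻¹ • ∫ s in (0 : ℝ)..τ, s ^ 2 • g s) ?_ ?_
  rcases eq_or_ne t 0 with rfl | ht
  · -- `τ⁻¹ • ∫₀^τ s² g` is the difference quotient at `0` of a primitive with derivative `0`
    have hslope := hasDerivAt_iff_tendsto_slope.mp (hasDerivAt_integral_pow_smul hg 2 0)
    have hslope_eq : slope (fun τ => ∫ s in (0 : ℝ)..τ, s ^ 2 • g s) 0 =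
        fun τ => τ⁻¹ • ∫ s in (0 : ℝ)..τ, s ^ 2 • g s := by
      ext τ
      simp [slope_def_module]
    rw [← continuousWithinAt_compl_self]
    simpa [ContinuousWithinAt, hslope_eq] using hslope
  · exact (continuousAt_inv₀ ht).smul (hasDerivAt_integral_pow_smul hg 2 t).continuousAt
  · simpa using (hasDerivAt_integral_pow_smul hg 1 t).continuousAt

theorem hasDerivAt_duhamel (hg : Continuous g) {t : ℝ} (ht : t ≠ 0) :
    HasDerivAt (duhamel g) (duhamelDeriv g t) t := by
  have hA : HasDerivAt (fun τ => ∫ s in (0 : ℝ)..τ, s • g s) (t • g t) t := by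
    simpa using hasDerivAt_integral_pow_smul hg 1 t
  refine HasDerivAt.congr_deriv (f := duhamel g)
    (((hasDerivAt_inv ht).smul (hasDerivAt_integral_pow_smul hg 2 t)).sub hA) ?_
  rw [duhamelDeriv, smul_smul]
  match_scalars <;> grind

theorem hasDerivAt_duhamelDeriv (hg : Continuous g) {t : ℝ} (ht : t ≠ 0) :
    HasDerivAt (duhamelDeriv g) (-(2 / t) • duhamelDeriv g t - g t) t := by
  refine HasDerivAt.congr_deriv (f := duhamelDeriv g)
    ((hasDerivAt_inv_pow 2 ht).smul (hasDerivAt_integral_pow_smul hg 2 t)).neg ?_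
  simp only [duhamelDeriv, smul_neg, smul_smul]
  match_scalars <;> field_simp

end Calculus

section Picard

variable {f : E → E} {θ : E} {ε : ℝ} (hε : 0 ≤ ε) {u u' : ℝ → E}

/-- Freezing the time outside `[0, ε]` lets the Picard map of `v = θ + duhamel (f ∘ v)` act on
bounded continuous functions on all of `ℝ`. -/
noncomputable def picard (f : E → E) (θ : E) (hε : 0 ≤ ε) (u : ℝ → E) (t : ℝ) : E :=
  θ + duhamel (f ∘ u) (projIcc 0 ε hε t)

theorem sq_projIcc_le (t : ℝ) : (projIcc 0 ε hε t : ℝ) ^ 2 ≤ ε ^ 2 :=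
  pow_le_pow_left₀ (projIcc 0 ε hε t).2.1 (projIcc 0 ε hε t).2.2 2

theorem continuous_picard [CompleteSpace E] (hu : Continuous (f ∘ u)) :
    Continuous (picard f θ hε u) :=
  continuous_const.add
    ((continuous_duhamel hu).comp (continuous_subtype_val.comp continuous_projIcc))

theorem norm_picard_sub_le {D : ℝ} (hu : Continuous (f ∘ u)) (hu' : Continuous (f ∘ u'))
    (hD : ∀ s, ‖f (u s) - f (u' s)‖ ≤ D) (t : ℝ) :
    ‖picard f θ hε u t - picard f θ hε u' t‖ ≤ 2 * D * ε ^ 2 := by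
  have hD0 : 0 ≤ D := (norm_nonneg _).trans (hD 0)
  calc ‖picard f θ hε u t - picard f θ hε u' t‖
      = ‖duhamel (f ∘ u - f ∘ u') (projIcc 0 ε hε t)‖ := by
        rw [picard, picard, add_sub_add_left_eq_sub, duhamel_sub hu hu']
    _ ≤ 2 * D * (projIcc 0 ε hε t : ℝ) ^ 2 := norm_duhamel_le hD _
    _ ≤ 2 * D * ε ^ 2 := mul_le_mul_of_nonneg_left (sq_projIcc_le hε t) (by positivity)

theorem norm_picard_sub_self_le {M : ℝ} (hM : ∀ s, ‖f (u s)‖ ≤ M) (t : ℝ) :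
    ‖picard f θ hε u t - θ‖ ≤ 2 * M * ε ^ 2 := by
  have hM0 : 0 ≤ M := (norm_nonneg _).trans (hM 0)
  calc ‖picard f θ hε u t - θ‖ ≤ 2 * M * (projIcc 0 ε hε t : ℝ) ^ 2 := by
        rw [picard, add_sub_cancel_left]; exact norm_duhamel_le hM _
    _ ≤ 2 * M * ε ^ 2 := mul_le_mul_of_nonneg_left (sq_projIcc_le hε t) (by positivity)

theorem exists_fixedPoint_picard [CompleteSpace E] {δ M : ℝ} {K : NNReal} (hδ : 0 ≤ δ)
    (hf : LipschitzOnWith K f (closedBall θ δ)) (hfM : ∀ x ∈ closedBall θ δ, ‖f x‖ ≤ M)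
    (hMε : 2 * M * ε ^ 2 ≤ δ) (hKε : 2 * K * ε ^ 2 < 1) :
    ∃ v : ℝ →ᵇ E, (∀ s, v s ∈ closedBall θ δ) ∧ picard f θ hε v = v := by
  set S := closedBall (const ℝ θ) δ
  have hS (u : S) (s : ℝ) : (u : ℝ →ᵇ E) s ∈ closedBall θ δ :=
    (mem_closedBall_const_iff hδ).mp u.2 s
  have hfu (u : S) : Continuous (f ∘ (u : ℝ →ᵇ E)) :=
    hf.continuousOn.comp_continuous (u : ℝ →ᵇ E).continuous (hS u)
  have hTθ (u : S) (t : ℝ) : ‖picard f θ hε (u : ℝ →ᵇ E) t - θ‖ ≤ δ :=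
    (norm_picard_sub_self_le hε (fun s => hfM _ (hS u s)) t).trans hMε
  let T : S → S := fun u => ⟨ofNormedAddCommGroup _ (continuous_picard hε (hfu u)) (‖θ‖ + δ)
    fun t => (norm_le_insert' _ θ).trans (by gcongr; exact hTθ u t),
    (mem_closedBall_const_iff hδ).mpr fun t => (dist_eq_norm _ _).trans_le (hTθ u t)⟩
  have hT : ContractingWith (2 * K * ε ^ 2).toNNReal T := by
    refine ⟨by simpa using hKε, LipschitzWith.of_dist_le_mul fun u u' => ?_⟩
    rw [Real.coe_toNNReal _ (by positivity), Subtype.dist_eq, Subtype.dist_eq,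
      BoundedContinuousFunction.dist_le (by positivity)]
    intro t
    have hD (s : ℝ) : ‖f ((u : ℝ →ᵇ E) s) - f ((u' : ℝ →ᵇ E) s)‖ ≤
        K * dist (u : ℝ →ᵇ E) u' := by
      rw [← dist_eq_norm]
      exact (hf.dist_le_mul _ (hS u s) _ (hS u' s)).trans
        (mul_le_mul_of_nonneg_left (dist_coe_le_dist s) K.2)
    rw [dist_eq_norm]
    exact (norm_picard_sub_le hε (hfu u) (hfu u') hD t).trans_eq (by ring)
  have : Nonempty S := ⟨⟨const ℝ θ, mem_closedBall_self hδ⟩⟩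
  have : CompleteSpace S := isClosed_closedBall.completeSpace_coe
  set v := ContractingWith.fixedPoint T hT
  exact ⟨v, hS v, congrArg (fun w : S => ⇑(w : ℝ →ᵇ E)) (ContractingWith.fixedPoint_isFixedPt hT)⟩

end Picard

theorem exists_local_solution [CompleteSpace E] {f : E → E} {θ : E} {δ : ℝ} {K : NNReal}
    (hδ : 0 < δ) (hf : LipschitzOnWith K f (closedBall θ δ)) :
    ∃ ε > 0, ∃ N > 0, ∃ v v' : ℝ → E, ∀ t ∈ Ioo 0 ε,
      HasDerivAt v (v' t) t ∧ HasDerivAt v' (-(2 / t) • v' t - f (v t)) t ∧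
      ‖v t - θ‖ ≤ N * t ^ 2 ∧ ‖v' t‖ ≤ N * t := by
  set M := ‖f θ‖ + K * δ
  have hM : 0 ≤ M := by positivity
  have hfM (x) (hx : x ∈ closedBall θ δ) : ‖f x‖ ≤ M := by
    calc ‖f x‖ ≤ ‖f θ‖ + dist (f x) (f θ) := by rw [dist_eq_norm]; exact norm_le_insert' _ _
      _ ≤ M := by
        have := (hf.dist_le_mul x hx θ (mem_closedBall_self hδ.le)).trans
          (mul_le_mul_of_nonneg_left (mem_closedBall.mp hx) K.2)
        linarith
  have hsq : Tendsto (fun ε : ℝ => ε ^ 2) (𝓝[>] 0) (𝓝 0) := by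
    simpa using ((continuous_pow 2).tendsto (0 : ℝ)).mono_left nhdsWithin_le_nhds
  obtain ⟨ε, hε, hMε, hKε⟩ := (eventually_mem_nhdsWithin.and
    (((hsq.const_mul (2 * M)).eventually_lt_const (u := δ) (by simpa using hδ)).and
      ((hsq.const_mul (2 * (K : ℝ))).eventually_lt_const (u := 1) (by simp)))).exists
  obtain ⟨v, hvθ, hv⟩ := exists_fixedPoint_picard hε.le hδ.le hf hfM hMε.le hKε
  have hfv : Continuous (f ∘ v) := hf.continuousOn.comp_continuous v.continuous hvθ
  have hfM' (s : ℝ) : ‖(f ∘ v) s‖ ≤ M := hfM _ (hvθ s)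
  have hv_eq (t : ℝ) (ht : t ∈ Icc 0 ε) : v t = θ + duhamel (f ∘ v) t :=
    (congrFun hv t).symm.trans (by rw [picard, projIcc_of_mem _ ht])
  refine ⟨ε, hε, 2 * M + 1, by positivity, v, duhamelDeriv (f ∘ v), fun t ht => ⟨?_, ?_, ?_, ?_⟩⟩
  · have hloc : (θ + duhamel (f ∘ v) ·) =ᶠ[𝓝 t] v :=
      eventually_of_mem (Ioo_mem_nhds ht.1 ht.2) fun s hs => (hv_eq s (Ioo_subset_Icc_self hs)).symm
    exact ((hasDerivAt_duhamel hfv ht.1.ne').const_add θ).congr_of_eventuallyEq hloc.symm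
  · exact hasDerivAt_duhamelDeriv hfv ht.1.ne'
  · rw [hv_eq t (Ioo_subset_Icc_self ht), add_sub_cancel_left]
    exact (norm_duhamel_le hfM' t).trans (by nlinarith)
  · exact (norm_duhamelDeriv_le hfM' ht.1.le).trans (by nlinarith [ht.1])

section Kelvin

noncomputable def kelvin (v : ℝ → E) (r : ℝ) : E := r⁻¹ • v r⁻¹

noncomputable def kelvinDeriv (v v' : ℝ → E) (r : ℝ) : E :=
  -((r ^ 2)⁻¹ • v r⁻¹ + (r ^ 3)⁻¹ • v' r⁻¹)

variable {v v' : ℝ → E} {r : ℝ}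

theorem hasDerivAt_kelvin (hr : r ≠ 0) (hv : HasDerivAt v (v' r⁻¹) r⁻¹) :
    HasDerivAt (kelvin v) (kelvinDeriv v v' r) r := by
  have hinv := hasDerivAt_inv hr
  refine HasDerivAt.congr_deriv (f := kelvin v) (hinv.smul (hv.scomp r hinv)) ?_
  rw [kelvinDeriv, smul_smul]
  match_scalars <;> field_simp

theorem hasDerivAt_kelvinDeriv {f : E → E} (hf : ∀ c : ℝ, 0 ≤ c → ∀ x, f (c • x) = c ^ 5 • f x)
    (hr : 0 < r) (hv : HasDerivAt v (v' r⁻¹) r⁻¹)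
    (hv' : HasDerivAt v' (-(2 / r⁻¹) • v' r⁻¹ - f (v r⁻¹)) r⁻¹) :
    HasDerivAt (kelvinDeriv v v') (-(2 / r) • kelvinDeriv v v' r - f (kelvin v r)) r := by
  have hinv := hasDerivAt_inv hr.ne'
  refine HasDerivAt.congr_deriv (f := kelvinDeriv v v')
    (((hasDerivAt_inv_pow 2 hr.ne').smul (hv.scomp r hinv)).add
      ((hasDerivAt_inv_pow 3 hr.ne').smul (hv'.scomp r hinv))).neg ?_
  rw [kelvinDeriv, kelvin, hf _ (inv_nonneg.mpr hr.le)]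
  simp only [Function.comp_apply, smul_neg, smul_add, smul_sub, smul_smul]
  match_scalars <;> grind

variable {θ : E} {N : ℝ}

theorem norm_kelvin_sub_le (hr : 0 < r) (hv : ‖v r⁻¹ - θ‖ ≤ N * r⁻¹ ^ 2) :
    ‖kelvin v r - r⁻¹ • θ‖ ≤ N / r ^ 3 :=
  calc ‖kelvin v r - r⁻¹ • θ‖ = r⁻¹ * ‖v r⁻¹ - θ‖ := by
        rw [kelvin, ← smul_sub, norm_smul, Real.norm_of_nonneg (inv_nonneg.mpr hr.le)]
    _ ≤ r⁻¹ * (N * r⁻¹ ^ 2) := by gcongr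
    _ = N / r ^ 3 := by field_simp

theorem norm_kelvinDeriv_add_le (hr : 0 < r) (hv : ‖v r⁻¹ - θ‖ ≤ N * r⁻¹ ^ 2)
    (hv' : ‖v' r⁻¹‖ ≤ N * r⁻¹) : ‖kelvinDeriv v v' r + (r ^ 2)⁻¹ • θ‖ ≤ 2 * N / r ^ 4 :=
  calc ‖kelvinDeriv v v' r + (r ^ 2)⁻¹ • θ‖
      = ‖(r ^ 2)⁻¹ • (v r⁻¹ - θ) + (r ^ 3)⁻¹ • v' r⁻¹‖ := by
        rw [kelvinDeriv, ← norm_neg]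
        congr 1
        simp only [smul_sub]
        abel
    _ ≤ (r ^ 2)⁻¹ * (N * r⁻¹ ^ 2) + (r ^ 3)⁻¹ * (N * r⁻¹) := by
        refine (norm_add_le _ _).trans (add_le_add ?_ ?_) <;>
          rw [norm_smul, Real.norm_of_nonneg (by positivity)] <;> gcongr
    _ = 2 * N / r ^ 4 := by field_simp; ring

end Kelvin

end RadialODE

open RadialODE in
theorem stmt1_general (m : ℕ)
    (f : EuclideanSpace ℝ (Fin m) → EuclideanSpace ℝ (Fin m))
    (hf : ContDiff ℝ 2 f)
    (hhom : ∀ c : ℝ, 0 ≤ c → ∀ x, f (c • x) = c ^ 5 • f x)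
    (θ : EuclideanSpace ℝ (Fin m)) :
    ∃ (R C : ℝ) (Z Z' Z'' : ℝ → EuclideanSpace ℝ (Fin m)),
      0 < R ∧ 0 < C ∧
      (∀ r, R ≤ r → HasDerivAt Z (Z' r) r ∧ HasDerivAt Z' (Z'' r) r) ∧
      ContinuousOn Z'' (Ici R) ∧
      (∀ r, R < r → Z'' r + (2 / r) • Z' r + f (Z r) = 0) ∧
      (∀ r, R ≤ r →
        ‖Z r - r⁻¹ • θ‖ ≤ C / r ^ 3 ∧ ‖Z' r + (r ^ 2)⁻¹ • θ‖ ≤ C / r ^ 4) := by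
  obtain ⟨K, U, hU, hK⟩ := ((hf.of_le (by norm_num)).contDiffAt (x := θ)).exists_lipschitzOnWith
  obtain ⟨δ, hδ, hδU⟩ := nhds_basis_closedBall.mem_iff.mp hU
  obtain ⟨ε, hε, N, hN, v, v', hv⟩ := exists_local_solution hδ (hK.mono hδU)
  have hv_inv (r : ℝ) (hr : 2 / ε ≤ r) : 0 < r ∧ r⁻¹ ∈ Ioo 0 ε := by
    have hr0 : 0 < r := (by positivity : (0 : ℝ) < 2 / ε).trans_le hr
    refine ⟨hr0, inv_pos.mpr hr0, ?_⟩
    calc r⁻¹ ≤ (2 / ε)⁻¹ := inv_anti₀ (by positivity) hr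
      _ < ε := by rw [inv_div]; linarith
  have hZ (r : ℝ) (hr : 2 / ε ≤ r) : HasDerivAt (kelvin v) (kelvinDeriv v v' r) r ∧
      HasDerivAt (kelvinDeriv v v') (-(2 / r) • kelvinDeriv v v' r - f (kelvin v r)) r :=
    have ⟨hr0, hr⟩ := hv_inv r hr
    ⟨hasDerivAt_kelvin hr0.ne' (hv _ hr).1,
      hasDerivAt_kelvinDeriv hhom hr0 (hv _ hr).1 (hv _ hr).2.1⟩
  refine ⟨2 / ε, 2 * N, kelvin v, kelvinDeriv v v',
    fun r => -(2 / r) • kelvinDeriv v v' r - f (kelvin v r), by positivity, by positivity, hZ,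
    fun r hr => ?_, fun r _ => by simp only [neg_smul]; abel, fun r hr => ?_⟩
  · have hr0 := (hv_inv r hr).1
    exact ((((continuousAt_const.div continuousAt_id hr0.ne').neg.smul (hZ r hr).2.continuousAt).sub
      (hf.continuous.continuousAt.comp (hZ r hr).1.continuousAt))).continuousWithinAt
  · obtain ⟨hr0, hr⟩ := hv_inv r hr
    obtain ⟨-, -, hvθ, hv'⟩ := hv _ hr
    exact ⟨(norm_kelvin_sub_le hr0 hvθ).trans (by gcongr; linarith),
      norm_kelvinDeriv_add_le hr0 hvθ hv'⟩

/-- Existence of the radial stationary solution `Z_θ` with prescribed asymptotics `θ/r`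
at infinity (existence part of Proposition 3.1). -/
theorem stmt1 (m : ℕ) (hm : 1 ≤ m)
    (f : EuclideanSpace ℝ (Fin m) → EuclideanSpace ℝ (Fin m))
    (hf : ContDiff ℝ 2 f)
    (hhom : ∀ c : ℝ, 0 ≤ c → ∀ x, f (c • x) = c ^ 5 • f x)
    (θ : EuclideanSpace ℝ (Fin m)) :
    ∃ (R C : ℝ) (Z Z' Z'' : ℝ → EuclideanSpace ℝ (Fin m)),
      0 < R ∧ 0 < C ∧
      (∀ r, R ≤ r → HasDerivAt Z (Z' r) r ∧ HasDerivAt Z' (Z'' r) r) ∧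
      ContinuousOn Z'' (Ici R) ∧
      (∀ r, R < r → Z'' r + (2 / r) • Z' r + f (Z r) = 0) ∧
      (∀ r, R ≤ r →
        ‖Z r - r⁻¹ • θ‖ ≤ C / r ^ 3 ∧ ‖Z' r + (r ^ 2)⁻¹ • θ‖ ≤ C / r ^ 4) :=
  stmt1_general m f hf hhom θ
end

section
/- Let m ≥ 1, let f : ℝ^m → ℝ^m be C² and homogeneous of degree 5, let R > 0 and θ ∈ ℝ^m. Let u, v : (R, ∞) → ℝ^m be two C² functions satisfying u''(r) + (2/r) u'(r) + f(u(r)) = 0 and v''(r) + (2/r) v'(r) + f(v(r)) = 0 on (R, ∞), and assume lim_{r→∞} r·u(r) = θ and lim_{r→∞} r·v(r) = θ. Then u(r) = v(r) for all r ∈ (R, ∞). -/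
/-!
Put `z r = r • (u r - v r)`. Since `(r w)'' = r (w'' + (2 / r) w')`, we get `z'' = -r (f u - f v)`;
as `‖u r‖, ‖v r‖ ≤ c / r` for large `r` and `f` is homogeneous of degree 5, `‖z''‖ ≤ K r⁻⁴ ‖z‖`.
Integrating twice from infinity, where `z → 0`, bounds `‖z‖` on `[ρ, ∞)` by `K ρ⁻² / 6` times
its own supremum there, so `z` vanishes near infinity. Then `u` and `v` have the same Cauchy data
at some point, and uniqueness for the locally Lipschitz first-order system in `(u, u')` gives
`u = v`.
-/

open Set Filter Topology
open scoped NNReal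

variable {E : Type*} [NormedAddCommGroup E] [NormedSpace ℝ E]

theorem exists_norm_sub_le_of_homogeneous {F : Type*} [NormedAddCommGroup F] [NormedSpace ℝ F]
    [FiniteDimensional ℝ E] {f : E → F} {k : ℕ} (hf : ContDiff ℝ 1 f)
    (hhom : ∀ c : ℝ, 0 ≤ c → ∀ x, f (c • x) = c ^ (k + 1) • f x) :
    ∃ C : ℝ≥0, ∀ ρ : ℝ, ∀ x y : E, ‖x‖ ≤ ρ → ‖y‖ ≤ ρ → ‖f x - f y‖ ≤ C * ρ ^ k * ‖x - y‖ := by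
  obtain ⟨C, hC⟩ := hf.contDiffOn.exists_lipschitzOnWith one_ne_zero
    (convex_closedBall (0 : E) 1) (isCompact_closedBall 0 1)
  refine ⟨C, fun ρ x y hx hy => ?_⟩
  obtain rfl | hρ := ((norm_nonneg x).trans hx).eq_or_lt
  · simp [norm_le_zero_iff.1 hx, norm_le_zero_iff.1 hy]
  have hunit : ∀ z : E, ‖z‖ ≤ ρ → ρ⁻¹ • z ∈ Metric.closedBall (0 : E) 1 := fun z hz => by
    rw [mem_closedBall_zero_iff, norm_smul, norm_inv, Real.norm_of_nonneg hρ.le]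
    exact inv_mul_le_one_of_le₀ hz hρ.le
  calc ‖f x - f y‖ = ρ ^ (k + 1) * ‖f (ρ⁻¹ • x) - f (ρ⁻¹ • y)‖ := by
        rw [← Real.norm_of_nonneg (pow_nonneg hρ.le (k + 1)), ← norm_smul, smul_sub,
          ← hhom ρ hρ.le, ← hhom ρ hρ.le, smul_inv_smul₀ hρ.ne', smul_inv_smul₀ hρ.ne']
    _ ≤ ρ ^ (k + 1) * (C * ‖ρ⁻¹ • x - ρ⁻¹ • y‖) := by
        gcongr
        exact hC.norm_sub_le (hunit x hx) (hunit y hy)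
    _ = C * ρ ^ k * ‖x - y‖ := by
        rw [← smul_sub, norm_smul, norm_inv, Real.norm_of_nonneg hρ.le]
        field_simp
        ring

theorem norm_deriv_le_of_norm_deriv₂_le {g g' g'' : ℝ → E} {t M : ℝ}
    (hg : ∀ s ∈ Icc t (t + 1), HasDerivAt g (g' s) s)
    (hg' : ∀ s ∈ Icc t (t + 1), HasDerivAt g' (g'' s) s)
    (hM : ∀ s ∈ Icc t (t + 1), ‖g'' s‖ ≤ M) :
    ‖g' t‖ ≤ ‖g (t + 1)‖ + ‖g t‖ + M := by
  have hM0 : 0 ≤ M := (norm_nonneg _).trans (hM t (left_mem_Icc.2 (by linarith)))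
  have hincr : ∀ s ∈ Icc t (t + 1), ‖g' s - g' t‖ ≤ M := fun s hs => by
    have := norm_image_sub_le_of_norm_deriv_le_segment' (fun x hx => (hg' x hx).hasDerivWithinAt)
      (fun x hx => hM x (Ico_subset_Icc_self hx)) s hs
    nlinarith [hs.2]
  -- mean value theorem for `s ↦ g s - s • g' t`, whose derivative is `g' s - g' t`
  have htaylor := norm_image_sub_le_of_norm_deriv_le_segment'
    (fun s hs => ((hg s hs).sub ((hasDerivAt_id s).smul_const (g' t))).hasDerivWithinAt)
    (fun s hs => by simpa using hincr s (Ico_subset_Icc_self hs)) (t + 1)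
    (right_mem_Icc.2 (by linarith))
  simp only [id, add_sub_cancel_left, mul_one] at htaylor
  calc ‖g' t‖ = ‖(g (t + 1) - g t) - ((g (t + 1) - (t + 1) • g' t) - (g t - t • g' t))‖ := by
        congr 1
        rw [add_smul, one_smul]
        abel
    _ ≤ ‖g (t + 1)‖ + ‖g t‖ + M := (norm_sub_le _ _).trans (add_le_add (norm_sub_le _ _) htaylor)

theorem norm_le_of_tendsto_zero_of_norm_deriv_le {g g' : ℝ → E} {a p D : ℝ} (ha : 0 < a)
    (hp : 1 < p) (hg : ∀ t ∈ Ici a, HasDerivAt g (g' t) t) (hlim : Tendsto g atTop (𝓝 0))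
    (hbound : ∀ t ∈ Ici a, ‖g' t‖ ≤ D * t ^ (-p)) :
    ∀ r ∈ Ici a, ‖g r‖ ≤ D * r ^ (1 - p) / (p - 1) := by
  intro r hr
  have hr0 : 0 < r := ha.trans_le hr
  have hD : 0 ≤ D := nonneg_of_mul_nonneg_left ((norm_nonneg _).trans (hbound r hr))
    (Real.rpow_pos_of_pos hr0 _)
  have hB : ∀ t ∈ Ioi 0, HasDerivAt (fun t => D * (r ^ (1 - p) - t ^ (1 - p)) / (p - 1))
      (D * t ^ (-p)) t := fun t ht => by
    refine ((((Real.hasDerivAt_rpow_const (Or.inl (ne_of_gt ht))).const_sub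
      (r ^ (1 - p))).const_mul D).div_const (p - 1)).congr_deriv ?_
    rw [sub_sub_cancel_left]
    field_simp [show p - 1 ≠ 0 by linarith]
    ring_nf
  have hincr : ∀ b ∈ Ici r, ‖g b - g r‖ ≤ D * r ^ (1 - p) / (p - 1) := fun b hb => by
    have hsub : Icc r b ⊆ Ici a := fun s hs => hr.trans hs.1
    refine (image_norm_le_of_norm_deriv_right_le_deriv_boundary' (f := fun t => g t - g r)
      (fun s hs => ((hg s (hsub hs)).continuousAt.sub continuousAt_const).continuousWithinAt)
      (fun s hs => ((hg s (hsub (Ico_subset_Icc_self hs))).sub_const (g r)).hasDerivWithinAt)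
      (by simp) (fun s hs => (hB s (hr0.trans_le hs.1)).continuousAt.continuousWithinAt)
      (fun s hs => (hB s (hr0.trans_le hs.1)).hasDerivWithinAt)
      (fun s hs => hbound s (hsub (Ico_subset_Icc_self hs))) (right_mem_Icc.2 hb)).trans ?_
    have : 0 ≤ b ^ (1 - p) := Real.rpow_nonneg (hr0.le.trans hb) _
    gcongr
    linarith
  have hnorm : Tendsto (fun b => ‖g b - g r‖) atTop (𝓝 ‖g r‖) := by
    simpa using (hlim.sub_const (g r)).norm
  exact le_of_tendsto hnorm ((eventually_ge_atTop r).mono hincr)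

theorem norm_le_of_tendsto_zero_of_norm_deriv₂_le {z z' z'' : ℝ → E} {a p D : ℝ} (ha : 0 < a)
    (hp : 2 < p) (hz : ∀ t ∈ Ici a, HasDerivAt z (z' t) t)
    (hz' : ∀ t ∈ Ici a, HasDerivAt z' (z'' t) t) (hlim : Tendsto z atTop (𝓝 0))
    (hbound : ∀ t ∈ Ici a, ‖z'' t‖ ≤ D * t ^ (-p)) :
    ∀ r ∈ Ici a, ‖z r‖ ≤ D * r ^ (2 - p) / ((p - 1) * (p - 2)) := by
  have hD : 0 ≤ D := nonneg_of_mul_nonneg_left ((norm_nonneg _).trans (hbound a self_mem_Ici))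
    (Real.rpow_pos_of_pos ha _)
  have hlim' : Tendsto z' atTop (𝓝 0) := by
    have hmajorant : Tendsto (fun t => ‖z (t + 1)‖ + ‖z t‖ + D * t ^ (-p)) atTop (𝓝 0) := by
      simpa using ((hlim.comp (tendsto_atTop_add_const_right _ 1 tendsto_id)).norm.add
        hlim.norm).add ((tendsto_rpow_neg_atTop (y := p) (by linarith)).const_mul D)
    refine squeeze_zero_norm' ?_ hmajorant
    filter_upwards [eventually_ge_atTop a] with t ht
    have hsub : Icc t (t + 1) ⊆ Ici a := fun s hs => ht.trans hs.1
    refine norm_deriv_le_of_norm_deriv₂_le (fun s hs => hz s (hsub hs))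
      (fun s hs => hz' s (hsub hs)) fun s hs => (hbound s (hsub hs)).trans ?_
    exact mul_le_mul_of_nonneg_left
      (Real.rpow_le_rpow_of_nonpos (ha.trans_le ht) hs.1 (by linarith)) hD
  have hz'bound := norm_le_of_tendsto_zero_of_norm_deriv_le ha (by linarith) hz' hlim' hbound
  intro r hr
  refine (norm_le_of_tendsto_zero_of_norm_deriv_le ha (p := p - 1) (D := D / (p - 1))
    (by linarith) hz hlim (fun t ht => (hz'bound t ht).trans_eq ?_) r hr).trans_eq ?_
  · rw [neg_sub, mul_div_right_comm]
  · rw [sub_sub, one_add_one_eq_two]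
    field_simp
    ring_nf

theorem nonpos_of_forall_le_mul {α : Type*} {s : Set α} {g : α → ℝ} {B₀ q : ℝ}
    (hq₀ : 0 ≤ q) (hq₁ : q < 1) (h₀ : ∀ x ∈ s, g x ≤ B₀)
    (hcontr : ∀ B, (∀ x ∈ s, g x ≤ B) → ∀ x ∈ s, g x ≤ q * B) :
    ∀ x ∈ s, g x ≤ 0 := by
  have hpow : ∀ n : ℕ, ∀ x ∈ s, g x ≤ q ^ n * B₀ := by
    intro n
    induction n with
    | zero => simpa using h₀
    | succ n ih => simpa [pow_succ, mul_assoc, mul_left_comm] using hcontr _ ih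
  intro x hx
  have hlim : Tendsto (fun n : ℕ => q ^ n * B₀) atTop (𝓝 0) := by
    simpa using (tendsto_pow_atTop_nhds_zero_of_lt_one hq₀ hq₁).mul_const B₀
  exact ge_of_tendsto' hlim fun n => hpow n x hx

theorem eventually_eq_zero_of_norm_deriv₂_le {z z' z'' : ℝ → E} {a p K : ℝ} (ha : 0 < a)
    (hp : 2 < p) (hK : 0 ≤ K) (hz : ∀ t ∈ Ici a, HasDerivAt z (z' t) t)
    (hz' : ∀ t ∈ Ici a, HasDerivAt z' (z'' t) t) (hlim : Tendsto z atTop (𝓝 0))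
    (hbound : ∀ t ∈ Ici a, ‖z'' t‖ ≤ K * t ^ (-p) * ‖z t‖) :
    ∀ᶠ t in atTop, z t = 0 := by
  have hsmall : ∀ᶠ t in atTop, K * t ^ (2 - p) / ((p - 1) * (p - 2)) ≤ 1 / 2 := by
    refine Tendsto.eventually_le_const (by norm_num : (0 : ℝ) < 1 / 2) ?_
    simpa [neg_sub] using ((tendsto_rpow_neg_atTop (by linarith : 0 < p - 2)).const_mul K).div_const
      ((p - 1) * (p - 2))
  have hbdd : ∀ᶠ t in atTop, ‖z t‖ ≤ 1 := by
    have hnorm := hlim.norm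
    rw [norm_zero] at hnorm
    exact hnorm.eventually_le_const one_pos
  obtain ⟨ρ, hρ⟩ := eventually_atTop.1 ((hsmall.and hbdd).and (eventually_ge_atTop a))
  have hsub : Ici ρ ⊆ Ici a := fun t ht => (hρ ρ le_rfl).2.trans ht
  have hρ0 : 0 < ρ := ha.trans_le (hρ ρ le_rfl).2
  have hzero := nonpos_of_forall_le_mul (s := Ici ρ) (g := fun t => ‖z t‖) (by norm_num)
    (by norm_num : (1 / 2 : ℝ) < 1) (fun t ht => (hρ t ht).1.2) fun B hB r hr => by
      have hB0 : 0 ≤ B := (norm_nonneg _).trans (hB r hr)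
      have hdecay := norm_le_of_tendsto_zero_of_norm_deriv₂_le hρ0 hp (D := K * B)
        (fun t ht => hz t (hsub ht)) (fun t ht => hz' t (hsub ht)) hlim
        fun t ht => (hbound t (hsub ht)).trans <| by
          rw [mul_right_comm K B]
          exact mul_le_mul_of_nonneg_left (hB t ht)
            (mul_nonneg hK (Real.rpow_nonneg (hρ0.le.trans ht) _))
      calc ‖z r‖ ≤ K * B * r ^ (2 - p) / ((p - 1) * (p - 2)) := hdecay r hr
        _ = K * r ^ (2 - p) / ((p - 1) * (p - 2)) * B := by ring
        _ ≤ 1 / 2 * B := mul_le_mul_of_nonneg_right (hρ r hr).1.1 hB0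
  filter_upwards [eventually_ge_atTop ρ] with t ht
  exact norm_le_zero_iff.1 (hzero t ht)

noncomputable def radialField (f : E → E) (t : ℝ) (p : E × E) : E × E :=
  (p.2, -(2 / t) • p.2 - f p.1)

theorem lipschitzOnWith_radialField {f : E → E} {s : Set (E × E)} {L : ℝ≥0}
    (hf : LipschitzOnWith L f (Prod.fst '' s)) {a t : ℝ} (ha : 0 < a) (hat : a ≤ t) :
    LipschitzOnWith (1 + (2 / a).toNNReal + L) (radialField f t) s := by
  refine LipschitzOnWith.of_dist_le_mul fun p hp q hq => ?_
  have h₁ : dist p.1 q.1 ≤ dist p q := by rw [Prod.dist_eq]; exact le_max_left _ _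
  have h₂ : dist p.2 q.2 ≤ dist p q := by rw [Prod.dist_eq]; exact le_max_right _ _
  have hfpq := hf.dist_le_mul p.1 (mem_image_of_mem _ hp) q.1 (mem_image_of_mem _ hq)
  have hcoef : ‖-(2 / t)‖ ≤ 2 / a := by
    rw [norm_neg, Real.norm_of_nonneg (div_nonneg zero_le_two (ha.le.trans hat))]
    exact div_le_div_of_nonneg_left zero_le_two ha hat
  have hd := dist_nonneg (x := p) (y := q)
  push_cast [Real.coe_toNNReal _ (by positivity : (0 : ℝ) ≤ 2 / a)]
  rw [Prod.dist_eq]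
  refine max_le ?_ ?_
  · show dist p.2 q.2 ≤ _
    nlinarith [L.coe_nonneg, (by positivity : (0 : ℝ) ≤ 2 / a)]
  · calc dist (-(2 / t) • p.2 - f p.1) (-(2 / t) • q.2 - f q.1)
        ≤ ‖-(2 / t)‖ * dist p.2 q.2 + L * dist p.1 q.1 :=
          (dist_sub_sub_le _ _ _ _).trans (by rw [dist_smul₀]; gcongr)
      _ ≤ (1 + 2 / a + L) * dist p q := by
          nlinarith [L.coe_nonneg, norm_nonneg (-(2 / t)), dist_nonneg (x := p.1) (y := q.1),
            dist_nonneg (x := p.2) (y := q.2)]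

def IsRadialSolution (f : E → E) (R : ℝ) (u u' : ℝ → E) : Prop :=
  ∀ r ∈ Ioi R, HasDerivAt u (u' r) r ∧ HasDerivAt u' (-(2 / r) • u' r - f (u r)) r

namespace IsRadialSolution

variable {f : E → E} {R : ℝ} {u u' v v' : ℝ → E}

theorem of_ode {u'' : ℝ → E} (hd : ∀ r ∈ Ioi R, HasDerivAt u (u' r) r)
    (hd' : ∀ r ∈ Ioi R, HasDerivAt u' (u'' r) r)
    (hode : ∀ r ∈ Ioi R, u'' r + (2 / r) • u' r + f (u r) = 0) : IsRadialSolution f R u u' :=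
  fun r hr => ⟨hd r hr, (hd' r hr).congr_deriv <| by
    rw [neg_smul, ← sub_eq_zero, ← hode r hr]
    abel⟩

theorem hasDerivAt_prod (hu : IsRadialSolution f R u u') {r : ℝ} (hr : r ∈ Ioi R) :
    HasDerivAt (fun s => (u s, u' s)) (radialField f r (u r, u' r)) r :=
  (hu r hr).1.prodMk (hu r hr).2

theorem hasDerivAt_smul (hu : IsRadialSolution f R u u') {r : ℝ} (hr : r ∈ Ioi R) :
    HasDerivAt (fun s => s • u s) (u r + r • u' r) r := by
  simpa [add_comm] using (hasDerivAt_id r).fun_smul (hu r hr).1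

theorem hasDerivAt_add_smul (hu : IsRadialSolution f R u u') (hR : 0 ≤ R) {r : ℝ}
    (hr : r ∈ Ioi R) : HasDerivAt (fun s => u s + s • u' s) (-(r • f (u r))) r := by
  refine ((hu r hr).1.add ((hasDerivAt_id r).smul (hu r hr).2)).congr_deriv ?_
  have hr0 : r ≠ 0 := (hR.trans_lt hr).ne'
  simp only [id, one_smul, smul_sub, smul_smul]
  rw [mul_neg, mul_div_cancel₀ _ hr0, neg_smul, two_smul]
  abel

theorem eqOn_of_eq_of_deriv_eq (hf : LocallyLipschitz f) (hR : 0 ≤ R)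
    (hu : IsRadialSolution f R u u') (hv : IsRadialSolution f R v v') {t₀ : ℝ} (ht₀ : R < t₀)
    (h₀ : u t₀ = v t₀) (h₁ : u' t₀ = v' t₀) : EqOn u v (Ioi R) := by
  intro r hr
  set a := (R + min r t₀) / 2
  set b := max r t₀ + 1
  have hRa : R < a := by have := lt_min hr ht₀; simp only [a]; linarith
  have ha : 0 < a := hR.trans_lt hRa
  have hsub : Icc a b ⊆ Ioi R := fun t ht => hRa.trans_le ht.1
  have hUc : ContinuousOn (fun s => (u s, u' s)) (Icc a b) := fun t ht =>
    (hu.hasDerivAt_prod (hsub ht)).continuousAt.continuousWithinAt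
  have hVc : ContinuousOn (fun s => (v s, v' s)) (Icc a b) := fun t ht =>
    (hv.hasDerivAt_prod (hsub ht)).continuousAt.continuousWithinAt
  set K := (fun s => (u s, u' s)) '' Icc a b ∪ (fun s => (v s, v' s)) '' Icc a b
  have hK : IsCompact K :=
    (isCompact_Icc.image_of_continuousOn hUc).union (isCompact_Icc.image_of_continuousOn hVc)
  obtain ⟨L, hL⟩ := hf.locallyLipschitzOn.exists_lipschitzOnWith_of_compact
    (hK.image continuous_fst)
  have ht₀ab : t₀ ∈ Ioo a b := by
    constructor
    · simp only [a]; linarith [min_le_right r t₀]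
    · simp only [b]; linarith [le_max_right r t₀]
  have hrab : r ∈ Icc a b := by
    constructor
    · simp only [a]; linarith [min_le_left r t₀, mem_Ioi.1 hr]
    · simp only [b]; linarith [le_max_left r t₀]
  have hUV := ODE_solution_unique_of_mem_Icc (s := fun _ => K)
    (fun t ht => lipschitzOnWith_radialField hL ha ht.1.le) ht₀ab
    hUc (fun t ht => hu.hasDerivAt_prod (hsub (Ioo_subset_Icc_self ht)))
    (fun t ht => Or.inl (mem_image_of_mem _ (Ioo_subset_Icc_self ht)))
    hVc (fun t ht => hv.hasDerivAt_prod (hsub (Ioo_subset_Icc_self ht)))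
    (fun t ht => Or.inr (mem_image_of_mem _ (Ioo_subset_Icc_self ht)))
    (Prod.ext h₀ h₁) hrab
  exact congrArg Prod.fst hUV

theorem eqOn_of_eventuallyEq (hf : LocallyLipschitz f) (hR : 0 ≤ R)
    (hu : IsRadialSolution f R u u') (hv : IsRadialSolution f R v v') (huv : u =ᶠ[atTop] v) :
    EqOn u v (Ioi R) := by
  obtain ⟨N, hN⟩ := eventually_atTop.1 huv
  set t₀ := max N R + 1
  have ht₀ : t₀ ∈ Ioi R := by simp only [t₀, mem_Ioi]; linarith [le_max_right N R]
  have hnhds : u =ᶠ[𝓝 t₀] v := by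
    filter_upwards [Ioi_mem_nhds (lt_add_one (max N R))] with t ht
    exact hN t ((le_max_left N R).trans ht.le)
  exact hu.eqOn_of_eq_of_deriv_eq hf hR hv ht₀ hnhds.eq_of_nhds
    (((hu t₀ ht₀).1.congr_of_eventuallyEq hnhds.symm).unique (hv t₀ ht₀).1)

theorem eventuallyEq_of_tendsto_smul [FiniteDimensional ℝ E] {k : ℕ} (hk : 2 < k)
    (hf : ContDiff ℝ 1 f) (hhom : ∀ c : ℝ, 0 ≤ c → ∀ x, f (c • x) = c ^ (k + 1) • f x)
    (hR : 0 ≤ R) (hu : IsRadialSolution f R u u') (hv : IsRadialSolution f R v v') {θ : E}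
    (hulim : Tendsto (fun r : ℝ => r • u r) atTop (𝓝 θ))
    (hvlim : Tendsto (fun r : ℝ => r • v r) atTop (𝓝 θ)) :
    u =ᶠ[atTop] v := by
  obtain ⟨C, hC⟩ := exists_norm_sub_le_of_homogeneous hf hhom
  set c := ‖θ‖ + 1
  have hθc : ‖θ‖ < c := lt_add_one _
  obtain ⟨N, hN⟩ := eventually_atTop.1
    ((hulim.norm.eventually_le_const hθc).and (hvlim.norm.eventually_le_const hθc))
  set a := max N (R + 1)
  have ha : 0 < a := by linarith [le_max_right N (R + 1)]
  have hsub : Ici a ⊆ Ioi R := fun t ht => by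
    simp only [mem_Ici, mem_Ioi] at ht ⊢; linarith [le_max_right N (R + 1)]
  have hbound : ∀ t ∈ Ici a, ‖-(t • f (u t)) - -(t • f (v t))‖
      ≤ C * c ^ k * t ^ (-(k : ℝ)) * ‖t • u t - t • v t‖ := by
    intro t ht
    have ht0 : 0 < t := ha.trans_le ht
    have hscale : ∀ w : E, ‖t • w‖ ≤ c → ‖w‖ ≤ c / t := fun w hw => by
      rw [norm_smul, Real.norm_of_nonneg ht0.le] at hw
      rw [le_div_iff₀ ht0]; linarith
    obtain ⟨hut, hvt⟩ := hN t ((le_max_left N (R + 1)).trans ht)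
    calc ‖-(t • f (u t)) - -(t • f (v t))‖ = t * ‖f (u t) - f (v t)‖ := by
          rw [neg_sub_neg, ← smul_sub, norm_smul, norm_sub_rev, Real.norm_of_nonneg ht0.le]
      _ ≤ t * (C * (c / t) ^ k * ‖u t - v t‖) := by
          gcongr
          exact hC _ _ _ (hscale _ hut) (hscale _ hvt)
      _ = C * c ^ k * t ^ (-(k : ℝ)) * ‖t • u t - t • v t‖ := by
          rw [← smul_sub, norm_smul, Real.norm_of_nonneg ht0.le, Real.rpow_neg ht0.le,
            Real.rpow_natCast, div_pow]
          field_simp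
  have hzero := eventually_eq_zero_of_norm_deriv₂_le ha (by exact_mod_cast hk) (by positivity)
    (fun t ht => (hu.hasDerivAt_smul (hsub ht)).fun_sub (hv.hasDerivAt_smul (hsub ht)))
    (fun t ht => (hu.hasDerivAt_add_smul hR (hsub ht)).fun_sub
      (hv.hasDerivAt_add_smul hR (hsub ht)))
    (by simpa using hulim.sub hvlim) hbound
  filter_upwards [hzero, eventually_gt_atTop 0] with t ht ht0
  rw [← smul_sub, smul_eq_zero, sub_eq_zero] at ht
  exact ht.resolve_left ht0.ne'

end IsRadialSolution

theorem stmt2_general (m : ℕ)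
    (f : EuclideanSpace ℝ (Fin m) → EuclideanSpace ℝ (Fin m))
    (hf : ContDiff ℝ 2 f)
    (hhom : ∀ c : ℝ, 0 ≤ c → ∀ x, f (c • x) = c ^ 5 • f x)
    (R : ℝ) (hR : 0 < R) (θ : EuclideanSpace ℝ (Fin m))
    (u u' u'' v v' v'' : ℝ → EuclideanSpace ℝ (Fin m))
    (hud : ∀ r ∈ Ioi R, HasDerivAt u (u' r) r)
    (hud' : ∀ r ∈ Ioi R, HasDerivAt u' (u'' r) r)
    (huode : ∀ r ∈ Ioi R, u'' r + (2 / r) • u' r + f (u r) = 0)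
    (hvd : ∀ r ∈ Ioi R, HasDerivAt v (v' r) r)
    (hvd' : ∀ r ∈ Ioi R, HasDerivAt v' (v'' r) r)
    (hvode : ∀ r ∈ Ioi R, v'' r + (2 / r) • v' r + f (v r) = 0)
    (hulim : Tendsto (fun r : ℝ => r • u r) atTop (nhds θ))
    (hvlim : Tendsto (fun r : ℝ => r • v r) atTop (nhds θ)) :
    ∀ r ∈ Ioi R, u r = v r := by
  have hu := IsRadialSolution.of_ode hud hud' huode
  have hv := IsRadialSolution.of_ode hvd hvd' hvode
  have hf₁ : ContDiff ℝ 1 f := hf.of_le (by norm_num)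
  exact hu.eqOn_of_eventuallyEq hf₁.locallyLipschitz hR.le hv <|
    hu.eventuallyEq_of_tendsto_smul (k := 4) (by norm_num) hf₁ hhom hR.le hv hulim hvlim

/-- Uniqueness part of Proposition 3.1: a radial stationary solution on `(R,∞)` is
determined by its asymptotic profile `θ/r` at infinity. -/
theorem stmt2 (m : ℕ) (hm : 1 ≤ m)
    (f : EuclideanSpace ℝ (Fin m) → EuclideanSpace ℝ (Fin m))
    (hf : ContDiff ℝ 2 f)
    (hhom : ∀ c : ℝ, 0 ≤ c → ∀ x, f (c • x) = c ^ 5 • f x)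
    (R : ℝ) (hR : 0 < R) (θ : EuclideanSpace ℝ (Fin m))
    (u u' u'' v v' v'' : ℝ → EuclideanSpace ℝ (Fin m))
    (hud : ∀ r ∈ Ioi R, HasDerivAt u (u' r) r)
    (hud' : ∀ r ∈ Ioi R, HasDerivAt u' (u'' r) r)
    (hu'' : ContinuousOn u'' (Ioi R))
    (huode : ∀ r ∈ Ioi R, u'' r + (2 / r) • u' r + f (u r) = 0)
    (hvd : ∀ r ∈ Ioi R, HasDerivAt v (v' r) r)
    (hvd' : ∀ r ∈ Ioi R, HasDerivAt v' (v'' r) r)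
    (hv'' : ContinuousOn v'' (Ioi R))
    (hvode : ∀ r ∈ Ioi R, v'' r + (2 / r) • v' r + f (v r) = 0)
    (hulim : Tendsto (fun r : ℝ => r • u r) atTop (nhds θ))
    (hvlim : Tendsto (fun r : ℝ => r • v r) atTop (nhds θ)) :
    ∀ r ∈ Ioi R, u r = v r :=
  stmt2_general m f hf hhom R hR θ u u' u'' v v' v'' hud hud' huode hvd hvd' hvode hulim hvlim
end

section
/- Let m ≥ 1, let f : ℝ^m → ℝ^m be C² and homogeneous of degree 5, let R > 0 and θ ∈ ℝ^m, and let u : (R, ∞) → ℝ^m be a C² solution of u''(r) + (2/r) u'(r) + f(u(r)) = 0 with lim_{r→∞} r·u(r) = θ. Then lim_{r→∞} r² u'(r) = −θ, and there exists R' ≥ R such that for all r ≥ R', u(r) = θ/r − ∫_r^∞ s^{−2} ( ∫_s^∞ ρ² f(u(ρ)) dρ ) ds (all the integrals converging absolutely). -/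
/-!
Homogeneity turns `r • u r → θ` into `‖f (u r)‖ = O(r⁻⁵)`. The equation says
`(r² u')' = -r² f (u)`, whose right side is `O(r⁻³)` and hence integrable, so `r² u' → L` with
`r² u' r = L + ∫_r^∞ ρ² f (u ρ) dρ`. Dividing by `r²` and integrating once more (`u → 0`) gives
`u r = -L / r - ∫_r^∞ s⁻² ∫_s^∞ ρ² f (u ρ) dρ ds`, where the double integral is `O(r⁻³)`;
multiplying by `r` and letting `r → ∞` identifies `L = -θ`.
-/

open Set Filter MeasureTheory Topology

variable {E : Type*} [NormedAddCommGroup E]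

theorem inv_sq_eq_rpow_neg_two {s : ℝ} (hs : 0 ≤ s) : (s ^ 2)⁻¹ = s ^ (-2 : ℝ) := by
  rw [Real.rpow_neg hs, ← Real.rpow_natCast]; norm_num

section RpowTail

variable {g : ℝ → E} {a C s : ℝ}

theorem integrableOn_Ioi_of_norm_le_rpow (hs : 0 < s) (ha : a < -1)
    (hmeas : AEStronglyMeasurable g (volume.restrict (Ioi s)))
    (hg : ∀ ρ ∈ Ioi s, ‖g ρ‖ ≤ C * ρ ^ a) : IntegrableOn g (Ioi s) :=
  ((integrableOn_Ioi_rpow_of_lt ha hs).const_mul C).mono' hmeas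
    ((ae_restrict_mem measurableSet_Ioi).mono hg)

variable [NormedSpace ℝ E]

theorem norm_integral_Ioi_le_of_norm_le_rpow (hs : 0 < s) (ha : a < -1)
    (hg : ∀ ρ ∈ Ioi s, ‖g ρ‖ ≤ C * ρ ^ a) :
    ‖∫ ρ in Ioi s, g ρ‖ ≤ C * (-s ^ (a + 1) / (a + 1)) := by
  calc ‖∫ ρ in Ioi s, g ρ‖ ≤ ∫ ρ in Ioi s, C * ρ ^ a :=
        norm_integral_le_of_norm_le ((integrableOn_Ioi_rpow_of_lt ha hs).const_mul C)
          ((ae_restrict_mem measurableSet_Ioi).mono hg)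
    _ = C * (-s ^ (a + 1) / (a + 1)) := by
        rw [integral_const_mul, integral_Ioi_rpow_of_lt ha hs]

theorem norm_inv_sq_smul_integral_Ioi_le (hs : 0 < s)
    (hg : ∀ ρ ∈ Ioi s, ‖g ρ‖ ≤ C * ρ ^ (-3 : ℝ)) :
    ‖(s ^ 2)⁻¹ • ∫ ρ in Ioi s, g ρ‖ ≤ C / 2 * s ^ (-4 : ℝ) := by
  have htail := norm_integral_Ioi_le_of_norm_le_rpow hs (by norm_num) hg
  norm_num at htail
  rw [norm_smul, norm_inv, norm_pow, Real.norm_of_nonneg hs.le]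
  calc (s ^ 2)⁻¹ * ‖∫ ρ in Ioi s, g ρ‖ ≤ (s ^ 2)⁻¹ * (C * ((s ^ 2)⁻¹ / 2)) := by gcongr
    _ = C / 2 * s ^ (-4 : ℝ) := by
        rw [inv_sq_eq_rpow_neg_two hs.le, show (-4 : ℝ) = -2 + -2 by norm_num,
          Real.rpow_add hs]
        ring

end RpowTail

variable [NormedSpace ℝ E]

theorem integrableOn_Ioi_inv_sq_smul_and_integral_eq [CompleteSpace E] {r : ℝ} (hr : 0 < r)
    (L : E) :
    IntegrableOn (fun s : ℝ => (s ^ 2)⁻¹ • L) (Ioi r) ∧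
      ∫ s in Ioi r, (s ^ 2)⁻¹ • L = r⁻¹ • L := by
  have hrpow : EqOn (fun s : ℝ => s ^ (-2 : ℝ) • L) (fun s => (s ^ 2)⁻¹ • L) (Ioi r) :=
    fun s hs => by simp only [inv_sq_eq_rpow_neg_two (hr.trans hs).le]
  refine ⟨IntegrableOn.congr_fun
    ((integrableOn_Ioi_rpow_of_lt (by norm_num) hr).smul_const L) hrpow measurableSet_Ioi, ?_⟩
  rw [← setIntegral_congr_fun measurableSet_Ioi hrpow, integral_smul_const,
    integral_Ioi_rpow_of_lt (by norm_num) hr]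
  norm_num [Real.rpow_neg_one]

theorem eventually_norm_pow_smul_comp_le_rpow_of_homogeneous {F : Type*}
    [NormedAddCommGroup F] [NormedSpace ℝ F] {f : E → F} {j k : ℕ} {v : ℝ → E} {θ : E}
    (hhom : ∀ c : ℝ, 0 ≤ c → ∀ x, f (c • x) = c ^ k • f x) (hf : ContinuousAt f θ)
    (hv : Tendsto (fun r => r • v r) atTop (𝓝 θ)) :
    ∀ᶠ r in atTop, ‖r ^ j • f (v r)‖ ≤ (‖f θ‖ + 1) * r ^ ((j : ℝ) - k) := by
  have hnear : ∀ᶠ r in atTop, ‖f (r • v r)‖ < ‖f θ‖ + 1 :=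
    ((hf.tendsto.comp hv).norm).eventually (gt_mem_nhds (lt_add_one _))
  filter_upwards [hnear, eventually_gt_atTop 0] with r hr hr0
  have hscale : f (v r) = (r⁻¹) ^ k • f (r • v r) := by
    rw [← hhom _ (inv_nonneg.2 hr0.le), smul_smul, inv_mul_cancel₀ hr0.ne', one_smul]
  rw [hscale, smul_smul, norm_smul, Real.norm_of_nonneg (by positivity), Real.rpow_sub hr0,
    Real.rpow_natCast, Real.rpow_natCast, inv_pow, ← div_eq_mul_inv, mul_comm]
  gcongr

theorem tendsto_zero_of_tendsto_smul {v : ℝ → E} {θ : E}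
    (hv : Tendsto (fun r => r • v r) atTop (𝓝 θ)) : Tendsto v atTop (𝓝 0) := by
  have h := tendsto_inv_atTop_zero.smul hv
  rw [zero_smul] at h
  refine h.congr' ?_
  filter_upwards [eventually_gt_atTop 0] with r hr
  rw [smul_smul, inv_mul_cancel₀ hr.ne', one_smul]

theorem hasDerivAt_sq_smul_of_radial_eq {u' u'' : ℝ → E} {F : E} {r : ℝ} (hr : r ≠ 0)
    (hu' : HasDerivAt u' (u'' r) r) (hode : u'' r + (2 / r) • u' r + F = 0) :
    HasDerivAt (fun t => t ^ 2 • u' t) (-(r ^ 2 • F)) r := by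
  have hsq : HasDerivAt (fun t : ℝ => t ^ 2) (2 * r) r := by
    simpa using hasDerivAt_pow 2 r
  have hu'' : u'' r = -((2 / r) • u' r + F) := by
    rw [add_assoc] at hode; exact eq_neg_of_add_eq_zero_left hode
  have hcoef : r ^ 2 * (2 / r) = 2 * r := by field_simp
  refine (hsq.smul hu').congr_deriv ?_
  rw [hu'', smul_neg, smul_add, smul_smul, hcoef]
  abel

theorem exists_tendsto_and_eq_add_integral_Ioi [CompleteSpace E] {w g : ℝ → E} {a : ℝ}
    (hw : ∀ r ∈ Ici a, HasDerivAt w (-g r) r) (hg : IntegrableOn g (Ioi a)) :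
    ∃ L, Tendsto w atTop (𝓝 L) ∧ ∀ r ∈ Ici a, w r = L + ∫ ρ in Ioi r, g ρ := by
  have hlim := tendsto_limUnder_of_hasDerivAt_of_integrableOn_Ioi
    (fun r hr => hw r (Ioi_subset_Ici_self hr)) hg.neg
  refine ⟨_, hlim, fun r hr => ?_⟩
  have h := integral_Ioi_of_hasDerivAt_of_tendsto'
    (fun x hx => hw x (Ici_subset_Ici.2 hr hx)) (hg.mono_set (Ioi_subset_Ioi hr)).neg hlim
  rw [integral_neg] at h
  rw [← sub_eq_iff_eq_add', ← neg_neg (∫ ρ in Ioi r, g ρ), h, neg_sub]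

section RadialTail

variable {u u' g : ℝ → E} {a C : ℝ} {L : E}

theorem tendsto_smul_of_eq_neg_inv_smul_sub_integral_Ioi (ha : 0 < a)
    (hg : ∀ ρ ∈ Ici a, ‖g ρ‖ ≤ C * ρ ^ (-3 : ℝ))
    (hu : ∀ r ∈ Ici a, u r = -(r⁻¹ • L) - ∫ s in Ioi r, (s ^ 2)⁻¹ • ∫ ρ in Ioi s, g ρ) :
    Tendsto (fun r => r • u r) atTop (𝓝 (-L)) := by
  have hbound : ∀ r ∈ Ici a, ‖r • u r - -L‖ ≤ C / 6 * r ^ (-2 : ℝ) := by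
    intro r hr
    have hr0 : 0 < r := ha.trans_le hr
    have hT := norm_integral_Ioi_le_of_norm_le_rpow hr0 (by norm_num : (-4 : ℝ) < -1)
      fun s hs => norm_inv_sq_smul_integral_Ioi_le (hr0.trans hs)
        fun ρ hρ => hg ρ (mem_Ici.2 (hr.trans (hs.trans hρ).le))
    have hdiff : r • u r - -L = -(r • ∫ s in Ioi r, (s ^ 2)⁻¹ • ∫ ρ in Ioi s, g ρ) := by
      rw [hu r hr, smul_sub, smul_neg, smul_smul, mul_inv_cancel₀ hr0.ne', one_smul]
      abel
    rw [hdiff, norm_neg, norm_smul, Real.norm_of_nonneg hr0.le]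
    calc r * ‖∫ s in Ioi r, (s ^ 2)⁻¹ • ∫ ρ in Ioi s, g ρ‖
        ≤ r * (C / 2 * (-r ^ ((-4 : ℝ) + 1) / ((-4 : ℝ) + 1))) := by gcongr
      _ = C / 6 * (r ^ (1 : ℝ) * r ^ ((-4 : ℝ) + 1)) := by rw [Real.rpow_one]; ring
      _ = C / 6 * r ^ (-2 : ℝ) := by rw [← Real.rpow_add hr0]; norm_num
  have hdecay : Tendsto (fun r : ℝ => C / 6 * r ^ (-2 : ℝ)) atTop (𝓝 0) := by
    simpa using (tendsto_rpow_neg_atTop (by norm_num : (0 : ℝ) < 2)).const_mul (C / 6)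
  exact tendsto_sub_nhds_zero_iff.1 <| squeeze_zero_norm'
    ((eventually_ge_atTop a).mono hbound) hdecay

variable [CompleteSpace E]

theorem integrableOn_Ioi_inv_sq_smul_integral_Ioi_and_eq (ha : 0 < a)
    (hu : ∀ r ∈ Ici a, HasDerivAt u (u' r) r) (hu' : ContinuousOn u' (Ici a))
    (hu0 : Tendsto u atTop (𝓝 0)) (hg : ∀ ρ ∈ Ici a, ‖g ρ‖ ≤ C * ρ ^ (-3 : ℝ))
    (hw : ∀ s ∈ Ici a, s ^ 2 • u' s = L + ∫ ρ in Ioi s, g ρ) {r : ℝ} (hr : r ∈ Ici a) :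
    IntegrableOn (fun s : ℝ => (s ^ 2)⁻¹ • ∫ ρ in Ioi s, g ρ) (Ioi r) ∧
      u r = -(r⁻¹ • L) - ∫ s in Ioi r, (s ^ 2)⁻¹ • ∫ ρ in Ioi s, g ρ := by
  have hr0 : 0 < r := ha.trans_le hr
  have hIoi : Ioi r ⊆ Ici a := Ioi_subset_Ici_self.trans (Ici_subset_Ici.2 hr)
  have hu'_eq : EqOn u' (fun s => (s ^ 2)⁻¹ • L + (s ^ 2)⁻¹ • ∫ ρ in Ioi s, g ρ) (Ioi r) := by
    intro s hs
    have hs0 : s ^ 2 ≠ 0 := pow_ne_zero 2 (hr0.trans hs).ne'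
    dsimp only
    rw [← smul_add, ← hw s (hIoi hs), smul_smul, inv_mul_cancel₀ hs0, one_smul]
  obtain ⟨hL_int, hL_eq⟩ := integrableOn_Ioi_inv_sq_smul_and_integral_eq hr0 L
  have hT_int : IntegrableOn (fun s : ℝ => (s ^ 2)⁻¹ • ∫ ρ in Ioi s, g ρ) (Ioi r) := by
    refine integrableOn_Ioi_of_norm_le_rpow hr0 (by norm_num : (-4 : ℝ) < -1) ?_
      fun s hs => norm_inv_sq_smul_integral_Ioi_le (hr0.trans hs)
        fun ρ hρ => hg ρ (hIoi (mem_Ioi.2 (hs.trans hρ)))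
    refine (((hu'.mono hIoi).aestronglyMeasurable measurableSet_Ioi).sub
      hL_int.aestronglyMeasurable).congr ?_
    filter_upwards [ae_restrict_mem measurableSet_Ioi] with s hs
    simp [hu'_eq hs]
  have hu'_int : IntegrableOn u' (Ioi r) :=
    (hL_int.add hT_int).congr_fun hu'_eq.symm measurableSet_Ioi
  have hu_eq := integral_Ioi_of_hasDerivAt_of_tendsto'
    (fun x hx => hu x (Ici_subset_Ici.2 hr hx)) hu'_int hu0
  rw [setIntegral_congr_fun measurableSet_Ioi hu'_eq, integral_add hL_int hT_int, hL_eq]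
    at hu_eq
  refine ⟨hT_int, ?_⟩
  rw [← neg_add', hu_eq, zero_sub, neg_neg]

end RadialTail

theorem stmt3_general (m : ℕ)
    (f : EuclideanSpace ℝ (Fin m) → EuclideanSpace ℝ (Fin m))
    (hf : ContDiff ℝ 2 f)
    (hhom : ∀ c : ℝ, 0 ≤ c → ∀ x, f (c • x) = c ^ 5 • f x)
    (R : ℝ) (θ : EuclideanSpace ℝ (Fin m))
    (u u' u'' : ℝ → EuclideanSpace ℝ (Fin m))
    (hud : ∀ r ∈ Ioi R, HasDerivAt u (u' r) r)
    (hud' : ∀ r ∈ Ioi R, HasDerivAt u' (u'' r) r)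
    (huode : ∀ r ∈ Ioi R, u'' r + (2 / r) • u' r + f (u r) = 0)
    (hulim : Tendsto (fun r : ℝ => r • u r) atTop (nhds θ)) :
    Tendsto (fun r : ℝ => (r ^ 2) • u' r) atTop (nhds (-θ)) ∧
    ∃ R' : ℝ, R ≤ R' ∧
      (∀ s : ℝ, R' ≤ s → IntegrableOn (fun ρ : ℝ => (ρ ^ 2) • f (u ρ)) (Ioi s)) ∧
      (∀ r : ℝ, R' ≤ r →
        IntegrableOn
          (fun s : ℝ => (s ^ 2)⁻¹ • ∫ ρ in Ioi s, (ρ ^ 2) • f (u ρ)) (Ioi r) ∧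
        u r = r⁻¹ • θ -
          ∫ s in Ioi r, (s ^ 2)⁻¹ • ∫ ρ in Ioi s, (ρ ^ 2) • f (u ρ)) := by
  have hg_ev : ∀ᶠ ρ in atTop,
      max R 0 < ρ ∧ ‖ρ ^ 2 • f (u ρ)‖ ≤ (‖f θ‖ + 1) * ρ ^ (-3 : ℝ) := by
    filter_upwards [eventually_gt_atTop (max R 0),
      eventually_norm_pow_smul_comp_le_rpow_of_homogeneous (j := 2) hhom
        hf.continuous.continuousAt hulim] with ρ hρ hg
    exact ⟨hρ, by convert hg using 3; norm_num⟩
  obtain ⟨a, ha⟩ := eventually_atTop.1 hg_ev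
  obtain ⟨haR, ha0⟩ := max_lt_iff.1 (ha a le_rfl).1
  have hIci : Ici a ⊆ Ioi R := Ici_subset_Ioi.2 haR
  have hg_int : ∀ s ∈ Ici a, IntegrableOn (fun ρ : ℝ => ρ ^ 2 • f (u ρ)) (Ioi s) := by
    intro s hs
    have hu_cont : ContinuousOn u (Ioi s) := fun r hr =>
      (hud r (hIci (mem_Ici.2 (hs.trans hr.le)))).continuousAt.continuousWithinAt
    refine integrableOn_Ioi_of_norm_le_rpow (ha0.trans_le hs) (by norm_num)
      (((continuous_pow 2).continuousOn.smul (hf.continuous.comp_continuousOn hu_cont))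
        |>.aestronglyMeasurable measurableSet_Ioi) fun ρ hρ => (ha ρ (hs.trans hρ.le)).2
  obtain ⟨L, hL, hw⟩ := exists_tendsto_and_eq_add_integral_Ioi
    (fun r hr => hasDerivAt_sq_smul_of_radial_eq (ha0.trans_le hr).ne' (hud' r (hIci hr))
      (huode r (hIci hr))) (hg_int a self_mem_Ici)
  have hu_eq := fun r (hr : r ∈ Ici a) =>
    integrableOn_Ioi_inv_sq_smul_integral_Ioi_and_eq ha0 (fun r hr => hud r (hIci hr))
      (fun r hr => (hud' r (hIci hr)).continuousAt.continuousWithinAt)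
      (tendsto_zero_of_tendsto_smul hulim) (fun ρ hρ => (ha ρ hρ).2) hw hr
  have hLθ : L = -θ := neg_eq_iff_eq_neg.1 <| tendsto_nhds_unique
    (tendsto_smul_of_eq_neg_inv_smul_sub_integral_Ioi ha0 (fun ρ hρ => (ha ρ hρ).2)
      fun r hr => (hu_eq r hr).2) hulim
  refine ⟨hLθ ▸ hL, a, haR.le, hg_int, fun r hr => ⟨(hu_eq r hr).1, ?_⟩⟩
  rw [(hu_eq r hr).2, hLθ, smul_neg, neg_neg]

/-- Intermediate claim in Proposition 3.1: a solution with asymptotics `θ/r` has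
derivative asymptotics `−θ/r²` and satisfies the associated integral equation. -/
theorem stmt3 (m : ℕ) (hm : 1 ≤ m)
    (f : EuclideanSpace ℝ (Fin m) → EuclideanSpace ℝ (Fin m))
    (hf : ContDiff ℝ 2 f)
    (hhom : ∀ c : ℝ, 0 ≤ c → ∀ x, f (c • x) = c ^ 5 • f x)
    (R : ℝ) (hR : 0 < R) (θ : EuclideanSpace ℝ (Fin m))
    (u u' u'' : ℝ → EuclideanSpace ℝ (Fin m))
    (hud : ∀ r ∈ Ioi R, HasDerivAt u (u' r) r)
    (hud' : ∀ r ∈ Ioi R, HasDerivAt u' (u'' r) r)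
    (hu'' : ContinuousOn u'' (Ioi R))
    (huode : ∀ r ∈ Ioi R, u'' r + (2 / r) • u' r + f (u r) = 0)
    (hulim : Tendsto (fun r : ℝ => r • u r) atTop (nhds θ)) :
    Tendsto (fun r : ℝ => (r ^ 2) • u' r) atTop (nhds (-θ)) ∧
    ∃ R' : ℝ, R ≤ R' ∧
      (∀ s : ℝ, R' ≤ s → IntegrableOn (fun ρ : ℝ => (ρ ^ 2) • f (u ρ)) (Ioi s)) ∧
      (∀ r : ℝ, R' ≤ r →
        IntegrableOn
          (fun s : ℝ => (s ^ 2)⁻¹ • ∫ ρ in Ioi s, (ρ ^ 2) • f (u ρ)) (Ioi r) ∧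
        u r = r⁻¹ • θ -
          ∫ s in Ioi r, (s ^ 2)⁻¹ • ∫ ρ in Ioi s, (ρ ^ 2) • f (u ρ)) :=
  stmt3_general m f hf hhom R θ u u' u'' hud hud' huode hulim
end

section
/- Let m ≥ 1, let f : ℝ^m → ℝ^m be C² and homogeneous of degree 5, let 0 < R0 < r1, and let u : (R0, r1) → ℝ^m be a C² solution of u''(r) + (2/r) u'(r) + f(u(r)) = 0 such that sup_{R0 < r < r1} |u(r)| < ∞. Then both limits lim_{r→R0+} u(r) and lim_{r→R0+} u'(r) exist in ℝ^m. -/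
open Set Filter

private lemma key_tendsto {E : Type*} [NormedAddCommGroup E] [NormedSpace ℝ E] [CompleteSpace E]
    (g g' : ℝ → E) (a b C : ℝ) (hab : a < b)
    (hd : ∀ r ∈ Ioo a b, HasDerivAt g (g' r) r)
    (hC : ∀ r ∈ Ioo a b, ‖g' r‖ ≤ C) :
    ∃ L, Tendsto g (nhdsWithin a (Ioi a)) (nhds L) := by
  have hC0 : 0 ≤ C := by
    have hmem : (a + b) / 2 ∈ Ioo a b := ⟨by linarith, by linarith⟩
    exact (norm_nonneg _).trans (hC _ hmem)
  have hlip : ∀ x ∈ Ioo a b, ∀ y ∈ Ioo a b, ‖g y - g x‖ ≤ C * ‖y - x‖ := fun x hx y hy =>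
    (convex_Ioo a b).norm_image_sub_le_of_norm_hasDerivWithin_le
      (fun r hr => (hd r hr).hasDerivWithinAt) hC hx hy
  have hne : (nhdsWithin a (Ioi a)).NeBot := nhdsGT_neBot a
  have hcauchy : Cauchy (map g (nhdsWithin a (Ioi a))) := by
    rw [Metric.cauchy_iff]
    refine ⟨map_neBot, fun ε hε => ?_⟩
    set δ : ℝ := min (ε / (2 * (C + 1))) (b - a) with hδdef
    have hδpos : 0 < δ := lt_min (by positivity) (by linarith)
    have hsub : Ioo a (a + δ) ⊆ Ioo a b := by
      apply Ioo_subset_Ioo le_rfl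
      have : δ ≤ b - a := min_le_right _ _
      linarith
    refine ⟨g '' Ioo a (a + δ), ?_, ?_⟩
    · rw [mem_map]
      exact mem_of_superset (Ioo_mem_nhdsGT_of_mem ⟨le_rfl, by linarith⟩)
        (subset_preimage_image g _)
    · rintro x ⟨p, hp, rfl⟩ y ⟨q, hq, rfl⟩
      rw [dist_eq_norm]
      calc ‖g p - g q‖ ≤ C * ‖p - q‖ := hlip q (hsub hq) p (hsub hp)
        _ ≤ C * δ := by
            refine mul_le_mul_of_nonneg_left ?_ hC0
            rw [Real.norm_eq_abs, abs_sub_le_iff]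
            constructor <;> linarith [hp.1, hp.2, hq.1, hq.2]
        _ ≤ C * (ε / (2 * (C + 1))) := mul_le_mul_of_nonneg_left (min_le_left _ _) hC0
        _ < ε := by
            rw [div_eq_inv_mul]
            have h1 : C < 2 * (C + 1) := by linarith
            have h2 : (0:ℝ) < 2 * (C + 1) := by linarith
            calc C * ((2 * (C + 1))⁻¹ * ε) = C / (2 * (C + 1)) * ε := by ring
              _ < 1 * ε := by
                  apply mul_lt_mul_of_pos_right _ hε
                  rw [div_lt_one h2]; exact h1
              _ = ε := one_mul ε
  obtain ⟨L, hL⟩ := cauchy_map_iff_exists_tendsto.mp hcauchy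
  exact ⟨L, hL⟩

/-- Proposition 3.1: at a finite left endpoint of the maximal interval of existence,
boundedness of `u` forces `u` and `u'` to extend continuously to the endpoint. -/
theorem stmt4 (m : ℕ) (hm : 1 ≤ m)
    (f : EuclideanSpace ℝ (Fin m) → EuclideanSpace ℝ (Fin m))
    (hf : ContDiff ℝ 2 f)
    (hhom : ∀ c : ℝ, 0 ≤ c → ∀ x, f (c • x) = c ^ 5 • f x)
    (R0 r1 : ℝ) (hR0 : 0 < R0) (hr1 : R0 < r1)
    (u u' u'' : ℝ → EuclideanSpace ℝ (Fin m))
    (hud : ∀ r ∈ Ioo R0 r1, HasDerivAt u (u' r) r)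
    (hud' : ∀ r ∈ Ioo R0 r1, HasDerivAt u' (u'' r) r)
    (hu'' : ContinuousOn u'' (Ioo R0 r1))
    (hode : ∀ r ∈ Ioo R0 r1, u'' r + (2 / r) • u' r + f (u r) = 0)
    (hbd : ∃ M : ℝ, ∀ r ∈ Ioo R0 r1, ‖u r‖ ≤ M) :
    (∃ L : EuclideanSpace ℝ (Fin m),
      Tendsto u (nhdsWithin R0 (Ioi R0)) (nhds L)) ∧
    (∃ L' : EuclideanSpace ℝ (Fin m),
      Tendsto u' (nhdsWithin R0 (Ioi R0)) (nhds L')) := by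
  obtain ⟨M, hM⟩ := hbd
  -- bound on f ∘ u
  obtain ⟨K, hK⟩ : ∃ K, ∀ x ∈ Metric.closedBall (0 : EuclideanSpace ℝ (Fin m)) (max M 0),
      ‖f x‖ ≤ K := by
    exact (isCompact_closedBall _ _).exists_bound_of_continuousOn hf.continuous.continuousOn
  have hKu : ∀ r ∈ Ioo R0 r1, ‖f (u r)‖ ≤ K := fun r hr => by
    apply hK
    rw [Metric.mem_closedBall, dist_zero_right]
    exact (hM r hr).trans (le_max_left _ _)
  have hK0 : 0 ≤ K := by
    have hmem : (R0 + r1) / 2 ∈ Ioo R0 r1 := ⟨by linarith, by linarith⟩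
    exact (norm_nonneg _).trans (hKu _ hmem)
  -- the function V r = r² • u' r has derivative -r² • f(u r)
  set V : ℝ → EuclideanSpace ℝ (Fin m) := fun r => (r ^ 2) • u' r with hVdef
  have hVd : ∀ r ∈ Ioo R0 r1, HasDerivAt V (-((r ^ 2) • f (u r))) r := by
    intro r hr
    have hr0 : (0:ℝ) < r := hR0.trans hr.1
    have h1 : HasDerivAt (fun s : ℝ => s ^ 2) (2 * r) r := by
      simpa using hasDerivAt_pow 2 r
    have h2 := h1.smul (hud' r hr)
    have heq : (r ^ 2) • u'' r + (2 * r) • u' r = -((r ^ 2) • f (u r)) := by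
      have h3 := hode r hr
      have h4 : u'' r = -((2 / r) • u' r) - f (u r) := by
        rw [show u'' r + (2 / r) • u' r + f (u r)
            = u'' r - (-((2 / r) • u' r) - f (u r)) by abel] at h3
        exact sub_eq_zero.mp h3
      rw [h4, smul_sub, smul_neg, smul_smul]
      have : r ^ 2 * (2 / r) = 2 * r := by field_simp
      rw [this]
      abel
    rw [← heq]
    exact h2
  have hVC : ∀ r ∈ Ioo R0 r1, ‖-((r ^ 2) • f (u r))‖ ≤ r1 ^ 2 * K := by
    intro r hr
    rw [norm_neg, norm_smul, Real.norm_eq_abs, abs_of_nonneg (sq_nonneg r)]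
    have h1 : r ^ 2 ≤ r1 ^ 2 := by nlinarith [hr.1, hr.2, hR0]
    exact mul_le_mul h1 (hKu r hr) (norm_nonneg _) (by positivity)
  -- V has a limit at R0⁺
  obtain ⟨LV, hLV⟩ := key_tendsto V (fun r => -((r ^ 2) • f (u r))) R0 r1 (r1 ^ 2 * K) hr1 hVd hVC
  -- hence u' has a limit
  have hu'lim : Tendsto u' (nhdsWithin R0 (Ioi R0)) (nhds ((R0 ^ 2)⁻¹ • LV)) := by
    have h1 : Tendsto (fun r : ℝ => (r ^ 2)⁻¹) (nhdsWithin R0 (Ioi R0)) (nhds ((R0 ^ 2)⁻¹)) := by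
      apply Tendsto.inv₀
      · exact ((continuous_pow 2).tendsto R0).mono_left nhdsWithin_le_nhds
      · positivity
    have h2 := h1.smul hLV
    apply h2.congr'
    filter_upwards [self_mem_nhdsWithin] with r hr
    have hr0 : (0:ℝ) < r := hR0.trans hr
    rw [hVdef]
    simp only [smul_smul]
    rw [inv_mul_cancel₀ (by positivity), one_smul]
  refine ⟨?_, (R0 ^ 2)⁻¹ • LV, hu'lim⟩
  -- u' is bounded on the interval, so u also has a limit
  have hmid : (R0 + r1) / 2 ∈ Ioo R0 r1 := ⟨by linarith, by linarith⟩
  have hVbd : ∀ r ∈ Ioo R0 r1, ‖V r‖ ≤ ‖V ((R0 + r1) / 2)‖ + r1 ^ 2 * K * (r1 - R0) := by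
    intro r hr
    have h1 : ‖V r - V ((R0 + r1) / 2)‖ ≤ r1 ^ 2 * K * ‖r - (R0 + r1) / 2‖ :=
      (convex_Ioo R0 r1).norm_image_sub_le_of_norm_hasDerivWithin_le
        (fun s hs => (hVd s hs).hasDerivWithinAt) hVC hmid hr
    have h2 : ‖r - (R0 + r1) / 2‖ ≤ r1 - R0 := by
      rw [Real.norm_eq_abs]
      rw [abs_sub_le_iff]
      constructor <;> [linarith [hr.1, hr.2]; linarith [hr.1, hr.2]]
    have h3 : ‖V r‖ ≤ ‖V r - V ((R0 + r1) / 2)‖ + ‖V ((R0 + r1) / 2)‖ := by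
      simpa using norm_add_le (V r - V ((R0 + r1) / 2)) (V ((R0 + r1) / 2))
    have h4 : r1 ^ 2 * K * ‖r - (R0 + r1) / 2‖ ≤ r1 ^ 2 * K * (r1 - R0) :=
      mul_le_mul_of_nonneg_left h2 (by positivity)
    linarith
  have hu'bd : ∀ r ∈ Ioo R0 r1,
      ‖u' r‖ ≤ (R0 ^ 2)⁻¹ * (‖V ((R0 + r1) / 2)‖ + r1 ^ 2 * K * (r1 - R0)) := by
    intro r hr
    have hr0 : (0:ℝ) < r := hR0.trans hr.1
    have h1 : u' r = (r ^ 2)⁻¹ • V r := by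
      rw [hVdef]; simp only [smul_smul]
      rw [inv_mul_cancel₀ (by positivity), one_smul]
    rw [h1, norm_smul, Real.norm_eq_abs, abs_of_nonneg (by positivity)]
    have h2 : (r ^ 2)⁻¹ ≤ (R0 ^ 2)⁻¹ := by
      apply inv_anti₀ (by positivity)
      nlinarith [hr.1]
    exact mul_le_mul h2 (hVbd r hr) (norm_nonneg _) (by positivity)
  obtain ⟨L, hL⟩ := key_tendsto u u' R0 r1
    ((R0 ^ 2)⁻¹ * (‖V ((R0 + r1) / 2)‖ + r1 ^ 2 * K * (r1 - R0))) hr1 hud hu'bd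
  exact ⟨L, hL⟩
end

section
/- Let m ≥ 1, let F : ℝ^m → ℝ be C³ and homogeneous of degree 6, and set f = ∇F. Let Q : ℝ^3 → ℝ^m be C² and satisfy −ΔQ(x) = f(Q(x)) for all x ∈ ℝ^3, and suppose there is a constant C > 0 with |Q(x)| ≤ C(1+|x|)^{−1} and |∇Q(x)| ≤ C(1+|x|)^{−2} for all x. Then the integrals ∫_{ℝ^3} |∇Q|² dx and ∫_{ℝ^3} F(Q) dx converge, ∫_{ℝ^3} |∇Q(x)|² dx = 6 ∫_{ℝ^3} F(Q(x)) dx, and consequently the energy E(Q) := (1/2)∫_{ℝ^3}|∇Q|² dx − ∫_{ℝ^3} F(Q) dx equals (1/3)∫_{ℝ^3}|∇Q|² dx. -/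
open MeasureTheory

/-- Componentwise Laplacian of a function on `ℝ³`. -/
noncomputable def lap3 {F : Type*} [NormedAddCommGroup F] [NormedSpace ℝ F]
    (u : EuclideanSpace ℝ (Fin 3) → F) (x : EuclideanSpace ℝ (Fin 3)) : F :=
  ∑ i : Fin 3,
    fderiv ℝ (fun y => fderiv ℝ u y (EuclideanSpace.single i 1)) x
      (EuclideanSpace.single i 1)

/-- `|∇u(x)|²`: the sum of squares of all partial derivatives of all components. -/
noncomputable def gradSq {F : Type*} [NormedAddCommGroup F] [NormedSpace ℝ F]
    (u : EuclideanSpace ℝ (Fin 3) → F) (x : EuclideanSpace ℝ (Fin 3)) : ℝ :=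
  ∑ i : Fin 3, ‖fderiv ℝ u x (EuclideanSpace.single i 1)‖ ^ 2

open Set Metric Filter Topology Module

/-! The vector field `Vᵢ = ⟪∂ᵢQ, Q⟫` has divergence `|∇Q|² + ⟪ΔQ, Q⟫`, which equals
`|∇Q|² - ⟪∇F(Q), Q⟫ = |∇Q|² - 6 F(Q)` by the equation and Euler's identity. The decay
assumptions give `|V| ≤ C² (1 + |x|)⁻³`, so the flux of `V` through the boundary of the cube
`[-R, R]³`, of area `24 R²`, is `O(1/R)`. The divergence being integrable, the divergence theorem
on these cubes gives `∫ (|∇Q|² - 6 F(Q)) = 0` in the limit `R → ∞`. -/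

theorem integrable_of_norm_le_div_one_add_norm_pow {E G : Type*} [NormedAddCommGroup E]
    [NormedSpace ℝ E] [FiniteDimensional ℝ E] [MeasurableSpace E] [BorelSpace E]
    {μ : Measure E} [μ.IsAddHaarMeasure] [NormedAddCommGroup G] {g : E → G}
    (hg : AEStronglyMeasurable g μ) {k : ℕ} (hk : finrank ℝ E < k) {M : ℝ}
    (hbound : ∀ x, ‖g x‖ ≤ M / (1 + ‖x‖) ^ k) : Integrable g μ := by
  refine ((integrable_one_add_norm (μ := μ) (r := k) (by exact_mod_cast hk)).const_mul M).mono'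
    hg (ae_of_all _ fun x => ?_)
  rw [Real.rpow_neg (by positivity), Real.rpow_natCast, ← div_eq_mul_inv]
  exact hbound x

section Homogeneous

variable {E : Type*} [NormedAddCommGroup E] [NormedSpace ℝ E] {F : E → ℝ} {k : ℕ}

theorem fderiv_apply_self_of_homogeneous (hhom : ∀ c : ℝ, 0 ≤ c → ∀ x, F (c • x) = c ^ k * F x)
    {v : E} (hF : DifferentiableAt ℝ F v) : fderiv ℝ F v v = k * F v := by
  have hray : HasDerivAt (fun c : ℝ => F (c • v)) (fderiv ℝ F v v) 1 := by
    have hline : HasDerivAt (fun c : ℝ => c • v) v 1 := by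
      simpa using (hasDerivAt_id (1 : ℝ)).smul_const v
    exact hF.hasFDerivAt.comp_hasDerivAt_of_eq 1 hline (one_smul ℝ v).symm
  have hpow : HasDerivAt (fun c : ℝ => c ^ k * F v) (k * F v) 1 := by
    simpa using (hasDerivAt_pow k (1 : ℝ)).mul_const (F v)
  refine hray.unique (hpow.congr_of_eventuallyEq ?_)
  filter_upwards [Ioi_mem_nhds one_pos] with c hc using hhom c (le_of_lt hc) v

theorem inner_gradient_self_of_homogeneous {H : Type*} [NormedAddCommGroup H]
    [InnerProductSpace ℝ H] [CompleteSpace H] {F : H → ℝ}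
    (hhom : ∀ c : ℝ, 0 ≤ c → ∀ x, F (c • x) = c ^ k * F x) {v : H}
    (hF : DifferentiableAt ℝ F v) : inner ℝ (gradient F v) v = k * F v := by
  rw [gradient, InnerProductSpace.toDual_symm_apply, fderiv_apply_self_of_homogeneous hhom hF]

theorem exists_abs_le_mul_norm_pow_of_homogeneous [ProperSpace E]
    (hhom : ∀ c : ℝ, 0 ≤ c → ∀ x, F (c • x) = c ^ k * F x) (hF : Continuous F) :
    ∃ K, 0 ≤ K ∧ ∀ y, |F y| ≤ K * ‖y‖ ^ k := by
  obtain ⟨K, hK⟩ := (isCompact_closedBall (0 : E) 1).exists_bound_of_continuousOn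
    hF.continuousOn
  refine ⟨K, (norm_nonneg _).trans (hK 0 (mem_closedBall_self zero_le_one)), fun y => ?_⟩
  have hy : ‖y‖ • ‖y‖⁻¹ • y = y := by
    rcases eq_or_ne y 0 with rfl | hy
    · simp
    · rw [smul_smul, mul_inv_cancel₀ (norm_ne_zero_iff.2 hy), one_smul]
  have hunit : ‖y‖⁻¹ • y ∈ closedBall (0 : E) 1 := by
    simpa [norm_smul] using inv_mul_le_one_of_le₀ le_rfl (norm_nonneg y)
  calc |F y| = ‖y‖ ^ k * ‖F (‖y‖⁻¹ • y)‖ := by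
        rw [← hy, hhom _ (norm_nonneg _), abs_mul, abs_pow, abs_norm, hy, Real.norm_eq_abs]
    _ ≤ ‖y‖ ^ k * K := by gcongr; exact hK _ hunit
    _ = K * ‖y‖ ^ k := mul_comm _ _

theorem integrable_comp_of_homogeneous_of_decay [ProperSpace E]
    (hhom : ∀ c : ℝ, 0 ≤ c → ∀ x, F (c • x) = c ^ k * F x) (hF : Continuous F)
    {X : Type*} [NormedAddCommGroup X] [NormedSpace ℝ X] [FiniteDimensional ℝ X]
    [MeasurableSpace X] [BorelSpace X] {μ : Measure X} [μ.IsAddHaarMeasure]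
    (hk : finrank ℝ X < k) {u : X → E} (hu : Continuous u) {C : ℝ}
    (hdecay : ∀ x, ‖u x‖ ≤ C / (1 + ‖x‖)) : Integrable (fun x => F (u x)) μ := by
  obtain ⟨K, hK0, hK⟩ := exists_abs_le_mul_norm_pow_of_homogeneous hhom hF
  refine integrable_of_norm_le_div_one_add_norm_pow (hF.comp hu).aestronglyMeasurable hk
    (M := K * C ^ k) fun x => ?_
  calc ‖F (u x)‖ ≤ K * ‖u x‖ ^ k := hK (u x)
    _ ≤ K * (C / (1 + ‖x‖)) ^ k := by gcongr; exact hdecay x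
    _ = K * C ^ k / (1 + ‖x‖) ^ k := by rw [div_pow, mul_div_assoc]

end Homogeneous

section Divergence

variable {n : ℕ} {M : ℝ}

theorem norm_setIntegral_insertNth_Icc_le {g : (Fin (n + 1) → ℝ) → ℝ}
    (hdecay : ∀ x, ‖g x‖ ≤ M / (1 + ‖x‖) ^ (n + 1)) (i : Fin (n + 1)) {R c : ℝ} (hR : 0 ≤ R)
    (hc : |c| = R) :
    ‖∫ z in Icc (fun _ : Fin n => -R) (fun _ => R), g (i.insertNth c z)‖ ≤
      M / (1 + R) ^ (n + 1) * (2 * R) ^ n := by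
  have hM : 0 ≤ M := by simpa using (norm_nonneg _).trans (hdecay 0)
  have hbound : ∀ z ∈ Icc (fun _ : Fin n => -R) (fun _ => R),
      ‖g (i.insertNth c z)‖ ≤ M / (1 + R) ^ (n + 1) := by
    intro z _
    have hnorm : R ≤ ‖(i.insertNth c z : Fin (n + 1) → ℝ)‖ := by
      simpa [hc] using norm_le_pi_norm (i.insertNth c z : Fin (n + 1) → ℝ) i
    exact (hdecay _).trans (by gcongr)
  have hvol : volume.real (Icc (fun _ : Fin n => -R) (fun _ => R)) = (2 * R) ^ n := by
    rw [measureReal_def, Real.volume_Icc_pi_toReal (fun _ => by linarith)]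
    simp [two_mul]
  simpa [hvol] using
    norm_setIntegral_le_of_norm_le_const (isCompact_Icc.measure_lt_top (μ := volume)) hbound

variable {f : Fin (n + 1) → (Fin (n + 1) → ℝ) → ℝ}

theorem norm_setIntegral_divergence_Icc_le (hf : ∀ i, Differentiable ℝ (f i))
    (hdecay : ∀ i x, ‖f i x‖ ≤ M / (1 + ‖x‖) ^ (n + 1)) {R : ℝ} (hR : 0 < R)
    (hdiv : IntegrableOn (fun x => ∑ i, fderiv ℝ (f i) x (Pi.single i 1))
      (Icc (fun _ => -R) (fun _ => R))) :
    ‖∫ x in Icc (fun _ => -R) (fun _ => R), ∑ i, fderiv ℝ (f i) x (Pi.single i 1)‖ ≤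
      2 ^ (n + 1) * (n + 1) * M / R := by
  have hM : 0 ≤ M := by simpa using (norm_nonneg _).trans (hdecay 0 0)
  rw [integral_divergence_of_hasFDerivAt_off_countable' _ _ (fun _ => by linarith) f
    (fun i x => fderiv ℝ (f i) x) ∅ countable_empty (fun i => (hf i).continuous.continuousOn)
    (fun x _ i => (hf i x).hasFDerivAt) hdiv]
  have hface : ∀ i, ∀ c, |c| = R →
      ‖∫ z in Icc (fun _ : Fin n => -R) (fun _ => R), f i (i.insertNth c z)‖ ≤
        M / (1 + R) ^ (n + 1) * (2 * R) ^ n :=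
    fun i c hc => norm_setIntegral_insertNth_Icc_le (hdecay i) i hR.le hc
  calc _ ≤ ∑ i : Fin (n + 1), 2 * (M / (1 + R) ^ (n + 1) * (2 * R) ^ n) := by
        refine (norm_sum_le _ _).trans (Finset.sum_le_sum fun i _ => ?_)
        refine (norm_sub_le _ _).trans ?_
        have hfront := hface i R (abs_of_pos hR)
        have hback := hface i (-R) (by rw [abs_neg, abs_of_pos hR])
        simp only [Function.comp_def] at hfront hback ⊢
        linarith
    _ = 2 ^ (n + 1) * (n + 1) * M * (R ^ n / (1 + R) ^ (n + 1)) := by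
        simp only [Finset.sum_const, Finset.card_univ, Fintype.card_fin, nsmul_eq_mul]
        push_cast
        ring
    _ ≤ 2 ^ (n + 1) * (n + 1) * M * (1 / R) := by
        refine mul_le_mul_of_nonneg_left ?_ (by positivity)
        rw [div_le_div_iff₀ (by positivity) hR, one_mul, ← pow_succ]
        gcongr
        linarith
    _ = _ := by ring

theorem integral_divergence_eq_zero_of_decay (hf : ∀ i, Differentiable ℝ (f i))
    (hdecay : ∀ i x, ‖f i x‖ ≤ M / (1 + ‖x‖) ^ (n + 1))
    (hdiv : Integrable (fun x => ∑ i, fderiv ℝ (f i) x (Pi.single i 1))) :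
    ∫ x, ∑ i, fderiv ℝ (f i) x (Pi.single i 1) = 0 := by
  set cube : ℝ → Set (Fin (n + 1) → ℝ) := fun R => Icc (fun _ => -R) (fun _ => R)
  have hcube_mono : Monotone cube := fun R R' h =>
    Icc_subset_Icc (fun _ => neg_le_neg h) (fun _ => h)
  have hcube_union : ⋃ R, cube R = univ := by
    refine eq_univ_of_forall fun x => mem_iUnion.2 ⟨‖x‖, fun i => ?_, fun i => ?_⟩
    · exact neg_le.1 (neg_le_abs (x i) |>.trans (norm_le_pi_norm x i))
    · exact (le_abs_self (x i)).trans (norm_le_pi_norm x i)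
  have hlim := tendsto_setIntegral_of_monotone (fun _ => measurableSet_Icc) hcube_mono
    hdiv.integrableOn
  rw [hcube_union, setIntegral_univ] at hlim
  refine tendsto_nhds_unique hlim (squeeze_zero_norm' ?_
    (tendsto_const_nhds (x := 2 ^ (n + 1) * (n + 1) * M).div_atTop tendsto_id))
  filter_upwards [eventually_gt_atTop 0] with R hR
  exact norm_setIntegral_divergence_Icc_le hf hdecay hR hdiv.integrableOn

end Divergence

theorem EuclideanSpace.integral_divergence_eq_zero_of_decay {n : ℕ}
    {f : Fin (n + 1) → EuclideanSpace ℝ (Fin (n + 1)) → ℝ} {M : ℝ}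
    (hf : ∀ i, Differentiable ℝ (f i))
    (hdecay : ∀ i x, ‖f i x‖ ≤ M / (1 + ‖x‖) ^ (n + 1))
    (hdiv : Integrable (fun x => ∑ i, fderiv ℝ (f i) x (EuclideanSpace.single i 1))) :
    ∫ x, ∑ i, fderiv ℝ (f i) x (EuclideanSpace.single i 1) = 0 := by
  set e := (PiLp.continuousLinearEquiv 2 ℝ (fun _ : Fin (n + 1) => ℝ)).symm
  have he : MeasurePreserving e := PiLp.volume_preserving_toLp _
  have hdiv_comp : ∀ y, ∑ i, fderiv ℝ (f i ∘ e) y (Pi.single i 1) =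
      ∑ i, fderiv ℝ (f i) (e y) (EuclideanSpace.single i 1) := by
    intro y
    simp [e.comp_right_fderiv, e]
  have hnorm : ∀ y, ‖y‖ ≤ ‖e y‖ := fun y =>
    pi_norm_le_iff_of_nonneg (norm_nonneg _) |>.2 fun i => PiLp.norm_apply_le (e y) i
  have hM : 0 ≤ M := by simpa using (norm_nonneg _).trans (hdecay 0 0)
  have hemb : MeasurableEmbedding e := e.toHomeomorph.measurableEmbedding
  rw [← he.integral_comp hemb]
  simp_rw [← hdiv_comp]
  refine _root_.integral_divergence_eq_zero_of_decay (f := fun i => f i ∘ e) (M := M)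
    (fun i => (hf i).comp e.differentiable) (fun i y => (hdecay i (e y)).trans ?_) ?_
  · gcongr
    exact hnorm y
  · simp_rw [hdiv_comp]
    exact (he.integrable_comp_emb hemb).2 hdiv

section Gradient

variable {G : Type*} [NormedAddCommGroup G]

theorem gradSq_nonneg [NormedSpace ℝ G] (u : EuclideanSpace ℝ (Fin 3) → G) (x) :
    0 ≤ gradSq u x :=
  Finset.sum_nonneg fun _ _ => sq_nonneg _

theorem norm_fderiv_single_le_sqrt_gradSq [NormedSpace ℝ G] (u : EuclideanSpace ℝ (Fin 3) → G)
    (x) (i : Fin 3) : ‖fderiv ℝ u x (EuclideanSpace.single i 1)‖ ≤ √(gradSq u x) :=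
  Real.le_sqrt_of_sq_le <| Finset.single_le_sum
    (f := fun j => ‖fderiv ℝ u x (EuclideanSpace.single j 1)‖ ^ 2)
    (fun _ _ => sq_nonneg _) (Finset.mem_univ i)

theorem continuous_gradSq [NormedSpace ℝ G] {u : EuclideanSpace ℝ (Fin 3) → G}
    (hu : ContDiff ℝ 1 u) : Continuous (gradSq u) :=
  continuous_finsetSum _ fun _ _ =>
    ((hu.continuous_fderiv one_ne_zero).clm_apply continuous_const).norm.pow 2

theorem integrable_gradSq_of_decay [NormedSpace ℝ G] {u : EuclideanSpace ℝ (Fin 3) → G}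
    (hu : ContDiff ℝ 1 u) {C : ℝ} (hdecay : ∀ x, √(gradSq u x) ≤ C / (1 + ‖x‖) ^ 2) :
    Integrable (gradSq u) := by
  refine integrable_of_norm_le_div_one_add_norm_pow (continuous_gradSq hu).aestronglyMeasurable
    (k := 4) (by simp) (M := C ^ 2) fun x => ?_
  rw [Real.norm_of_nonneg (gradSq_nonneg u x), ← Real.sq_sqrt (gradSq_nonneg u x)]
  calc √(gradSq u x) ^ 2 ≤ (C / (1 + ‖x‖) ^ 2) ^ 2 :=
        pow_le_pow_left₀ (Real.sqrt_nonneg _) (hdecay x) 2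
    _ = C ^ 2 / (1 + ‖x‖) ^ 4 := by rw [div_pow, ← pow_mul]

theorem sum_fderiv_inner_fderiv_single [InnerProductSpace ℝ G]
    {u : EuclideanSpace ℝ (Fin 3) → G} (hu : ContDiff ℝ 2 u) (x) :
    ∑ i : Fin 3, fderiv ℝ (fun y => inner ℝ (fderiv ℝ u y (EuclideanSpace.single i 1)) (u y)) x
      (EuclideanSpace.single i 1) = gradSq u x + inner ℝ (lap3 u x) (u x) := by
  have hpartial : ∀ i : Fin 3,
      Differentiable ℝ (fun y => fderiv ℝ u y (EuclideanSpace.single i 1)) := fun _ =>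
    ((hu.fderiv_right le_rfl).differentiable one_ne_zero).clm_apply (differentiable_const _)
  simp only [fderiv_inner_apply ℝ (hpartial _ x) (hu.differentiable two_ne_zero x),
    Finset.sum_add_distrib, gradSq, lap3, sum_inner, real_inner_self_eq_norm_sq]

theorem integral_gradSq_add_inner_lap3_eq_zero [InnerProductSpace ℝ G]
    {u : EuclideanSpace ℝ (Fin 3) → G} (hu : ContDiff ℝ 2 u) {C : ℝ}
    (hdecay : ∀ x, ‖u x‖ ≤ C / (1 + ‖x‖))
    (hdecay' : ∀ x, √(gradSq u x) ≤ C / (1 + ‖x‖) ^ 2)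
    (hint : Integrable fun x => gradSq u x + inner ℝ (lap3 u x) (u x)) :
    ∫ x, gradSq u x + inner ℝ (lap3 u x) (u x) = 0 := by
  simp_rw [← sum_fderiv_inner_fderiv_single hu] at hint ⊢
  refine EuclideanSpace.integral_divergence_eq_zero_of_decay (M := C ^ 2) (fun i => ?_)
    (fun i x => ?_) hint
  · exact (((hu.fderiv_right le_rfl).differentiable one_ne_zero).clm_apply
      (differentiable_const _)).inner ℝ (hu.differentiable two_ne_zero)
  · have hpartial := (norm_fderiv_single_le_sqrt_gradSq u x i).trans (hdecay' x)
    calc _ ≤ ‖fderiv ℝ u x (EuclideanSpace.single i 1)‖ * ‖u x‖ := norm_inner_le_norm _ _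
      _ ≤ C / (1 + ‖x‖) ^ 2 * (C / (1 + ‖x‖)) :=
        mul_le_mul hpartial (hdecay x) (norm_nonneg _) ((norm_nonneg _).trans hpartial)
      _ = C ^ 2 / (1 + ‖x‖) ^ (2 + 1) := by rw [div_mul_div_comm, ← sq, ← pow_succ]

end Gradient

theorem stmt6_general (m : ℕ)
    (F : EuclideanSpace ℝ (Fin m) → ℝ) (hF : ContDiff ℝ 3 F)
    (hhom : ∀ c : ℝ, 0 ≤ c → ∀ x, F (c • x) = c ^ 6 * F x)
    (Q : EuclideanSpace ℝ (Fin 3) → EuclideanSpace ℝ (Fin m))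
    (hQ : ContDiff ℝ 2 Q)
    (heq : ∀ x, -(lap3 Q x) = gradient F (Q x))
    (C : ℝ)
    (hdecay : ∀ x, ‖Q x‖ ≤ C / (1 + ‖x‖))
    (hdecay' : ∀ x, Real.sqrt (gradSq Q x) ≤ C / (1 + ‖x‖) ^ 2) :
    Integrable (fun x => gradSq Q x) ∧
    Integrable (fun x => F (Q x)) ∧
    (∫ x, gradSq Q x) = 6 * ∫ x, F (Q x) ∧
    (1 / 2) * (∫ x, gradSq Q x) - (∫ x, F (Q x)) = (1 / 3) * ∫ x, gradSq Q x := by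
  have hint_grad : Integrable (fun x => gradSq Q x) :=
    integrable_gradSq_of_decay (hQ.of_le one_le_two) hdecay'
  have hint_F : Integrable (fun x => F (Q x)) :=
    integrable_comp_of_homogeneous_of_decay hhom hF.continuous (by simp) hQ.continuous hdecay
  have hintegrand : ∀ x, gradSq Q x + inner ℝ (lap3 Q x) (Q x) = gradSq Q x - 6 * F (Q x) := by
    intro x
    rw [← neg_neg (lap3 Q x), heq, inner_neg_left,
      inner_gradient_self_of_homogeneous hhom (hF.differentiable (by norm_num) _)]
    push_cast
    ring
  have hint_div : Integrable fun x => gradSq Q x - 6 * F (Q x) :=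
    hint_grad.sub (hint_F.const_mul 6)
  have hzero := integral_gradSq_add_inner_lap3_eq_zero hQ hdecay hdecay'
    (by simpa only [hintegrand] using hint_div)
  simp only [hintegrand] at hzero
  rw [integral_sub hint_grad (hint_F.const_mul 6), integral_const_mul] at hzero
  exact ⟨hint_grad, hint_F, by linarith, by linarith⟩

/-- Pohozaev-type identity of Proposition 3.8(1) for classical decaying stationary
states `−ΔQ = ∇F(Q)` with potential `F` homogeneous of degree 6. -/
theorem stmt6 (m : ℕ) (hm : 1 ≤ m)
    (F : EuclideanSpace ℝ (Fin m) → ℝ) (hF : ContDiff ℝ 3 F)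
    (hhom : ∀ c : ℝ, 0 ≤ c → ∀ x, F (c • x) = c ^ 6 * F x)
    (Q : EuclideanSpace ℝ (Fin 3) → EuclideanSpace ℝ (Fin m))
    (hQ : ContDiff ℝ 2 Q)
    (heq : ∀ x, -(lap3 Q x) = gradient F (Q x))
    (C : ℝ) (hC : 0 < C)
    (hdecay : ∀ x, ‖Q x‖ ≤ C / (1 + ‖x‖))
    (hdecay' : ∀ x, Real.sqrt (gradSq Q x) ≤ C / (1 + ‖x‖) ^ 2) :
    Integrable (fun x => gradSq Q x) ∧
    Integrable (fun x => F (Q x)) ∧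
    (∫ x, gradSq Q x) = 6 * ∫ x, F (Q x) ∧
    (1 / 2) * (∫ x, gradSq Q x) - (∫ x, F (Q x)) = (1 / 3) * ∫ x, gradSq Q x :=
  stmt6_general m F hF hhom Q hQ heq C hdecay hdecay'
end

section
/- Let m ≥ 1, let F : ℝ^m → ℝ be C³ and homogeneous of degree 6, and set f = ∇F. Let Q : [0, ∞) → ℝ^m be continuous on [0, ∞), C² on (0, ∞), not constant, satisfying Q''(r) + (2/r) Q'(r) + f(Q(r)) = 0 on (0, ∞), lim_{r→0+} Q'(r) = 0, lim_{r→∞} Q(r) = 0 and lim_{r→∞} Q'(r) = 0. Then the integral ∫_0^∞ (2/r) |Q'(r)|² dr converges, and F(Q(0)) = ∫_0^∞ (2/r) |Q'(r)|² dr > 0. -/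
open Set Filter MeasureTheory Function

open scoped RealInnerProductSpace Topology

/-!
The energy `E(r) = ‖Q'(r)‖² / 2 + F(Q(r))` of a radial solution satisfies
`E' = -(2/r) ‖Q'‖² ≤ 0`. It tends to `F(Q(0))` as `r → 0⁺` and to `F(0) = 0` as `r → ∞`
(homogeneity), so integrating `E'` over `(0, ∞)` gives the identity. The integrand is continuous,
nonnegative, and positive somewhere since `Q` is not constant, so the integral is positive.
-/

theorem eq_of_hasDerivAt_zero_of_continuousOn_Ici {E : Type*} [NormedAddCommGroup E]
    [NormedSpace ℝ E] [CompleteSpace E] {f : ℝ → E} {a : ℝ}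
    (hc : ContinuousOn f (Ici a)) (hd : ∀ x ∈ Ioi a, HasDerivAt f 0 x) :
    ∀ x ∈ Ici a, f x = f a := by
  intro x hx
  have := intervalIntegral.integral_eq_sub_of_hasDerivAt_of_le hx (hc.mono Icc_subset_Ici_self)
    (fun y hy => hd y hy.1) intervalIntegrable_const
  simpa [eq_comm, sub_eq_zero] using this

theorem integrableOn_Ioi_and_integral_eq_of_hasDerivAt_neg {e g : ℝ → ℝ} {a L l : ℝ}
    (hderiv : ∀ x ∈ Ioi a, HasDerivAt e (-g x) x) (hg : ∀ x ∈ Ioi a, 0 ≤ g x)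
    (ha : Tendsto e (𝓝[>] a) (𝓝 L)) (hinf : Tendsto e atTop (𝓝 l)) :
    IntegrableOn g (Ioi a) ∧ ∫ x in Ioi a, g x = L - l := by
  -- Redefining `e` at `a` as its right limit lets the FTC on `[a, ∞)` apply.
  set e₀ := update e a L
  have hcont : ContinuousWithinAt e₀ (Ici a) a := by
    rwa [continuousWithinAt_update_same, Ici_sdiff_left]
  have hderiv₀ : ∀ x ∈ Ioi a, HasDerivAt e₀ (-g x) x := fun x hx =>
    (hderiv x hx).congr_of_eventuallyEq <| (eventually_ne_nhds (ne_of_gt hx)).mono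
      fun y hy => update_of_ne hy L e
  have hinf₀ : Tendsto e₀ atTop (𝓝 l) :=
    hinf.congr' <| (eventually_ne_atTop a).mono fun y hy => (update_of_ne hy L e).symm
  have hint : IntegrableOn (fun x => -g x) (Ioi a) :=
    integrableOn_Ioi_deriv_of_nonpos hcont hderiv₀ (fun x hx => neg_nonpos.2 (hg x hx)) hinf₀
  refine ⟨hint.neg.congr_fun (fun x _ => neg_neg (g x)) measurableSet_Ioi, ?_⟩
  have := integral_Ioi_of_hasDerivAt_of_tendsto hcont hderiv₀ hint hinf₀
  rw [integral_neg, show e₀ a = L from update_self a L e] at this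
  linarith

section Energy

variable {E : Type*} [NormedAddCommGroup E]

noncomputable def energy (F : E → ℝ) (u u' : ℝ → E) (t : ℝ) : ℝ := ‖u' t‖ ^ 2 / 2 + F (u t)

theorem tendsto_energy {F : E → ℝ} {u u' : ℝ → E} {l : Filter ℝ} {p : E}
    (hF : ContinuousAt F p) (hu : Tendsto u l (𝓝 p)) (hu' : Tendsto u' l (𝓝 0)) :
    Tendsto (energy F u u') l (𝓝 (F p)) := by
  have := ((hu'.norm.pow 2).div_const 2).add (hF.tendsto.comp hu)
  rwa [norm_zero, zero_pow two_ne_zero, zero_div, zero_add] at this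

theorem hasDerivAt_energy [InnerProductSpace ℝ E] [CompleteSpace E] {F : E → ℝ}
    {u u' u'' : ℝ → E} {c r : ℝ} (hu : HasDerivAt u (u' r) r) (hu' : HasDerivAt u' (u'' r) r)
    (hF : DifferentiableAt ℝ F (u r)) (hode : u'' r + c • u' r + gradient F (u r) = 0) :
    HasDerivAt (energy F u u') (-(c * ‖u' r‖ ^ 2)) r := by
  have hFu : HasDerivAt (fun t => F (u t)) ⟪gradient F (u r), u' r⟫ r := by
    have := hF.hasGradientAt.hasFDerivAt.comp_hasDerivAt r hu
    rwa [InnerProductSpace.toDual_apply_apply] at this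
  refine ((hu'.norm_sq.div_const 2).add hFu).congr_deriv ?_
  have hu'' : u'' r = -(c • u' r) - gradient F (u r) := by
    rw [← sub_eq_zero, ← hode]; abel
  rw [hu'', inner_sub_right, inner_neg_right, real_inner_smul_right, real_inner_self_eq_norm_sq,
    real_inner_comm]
  ring

end Energy

theorem setIntegral_pos_of_continuousOn {X : Type*} [TopologicalSpace X] [MeasurableSpace X]
    [OpensMeasurableSpace X] {μ : Measure X} [μ.IsOpenPosMeasure] {f : X → ℝ} {s : Set X} {x : X}
    (hs : IsOpen s) (hf : ContinuousOn f s) (hfi : IntegrableOn f s μ) (hnn : ∀ y ∈ s, 0 ≤ f y)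
    (hx : x ∈ s) (hfx : 0 < f x) : 0 < ∫ y in s, f y ∂μ := by
  rw [setIntegral_pos_iff_support_of_nonneg_ae
    ((ae_restrict_iff' hs.measurableSet).2 (ae_of_all _ hnn)) hfi]
  refine (IsOpen.measure_pos μ (hf.isOpen_inter_preimage hs isOpen_Ioi) ⟨x, hx, hfx⟩).trans_le
    (measure_mono ?_)
  rintro y ⟨hys, hy⟩
  exact ⟨ne_of_gt hy, hys⟩

theorem stmt7_general (m : ℕ)
    (F : EuclideanSpace ℝ (Fin m) → ℝ) (hF : ContDiff ℝ 3 F)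
    (hhom : ∀ c : ℝ, 0 ≤ c → ∀ x, F (c • x) = c ^ 6 * F x)
    (Q Q' Q'' : ℝ → EuclideanSpace ℝ (Fin m))
    (hQc : ContinuousOn Q (Ici 0))
    (hQd : ∀ r : ℝ, 0 < r → HasDerivAt Q (Q' r) r)
    (hQd' : ∀ r : ℝ, 0 < r → HasDerivAt Q' (Q'' r) r)
    (hnc : ¬ ∃ c, ∀ r : ℝ, 0 ≤ r → Q r = c)
    (hode : ∀ r : ℝ, 0 < r → Q'' r + (2 / r) • Q' r + gradient F (Q r) = 0)
    (hQ'0 : Tendsto Q' (nhdsWithin 0 (Ioi 0)) (nhds 0))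
    (hQinf : Tendsto Q atTop (nhds 0))
    (hQ'inf : Tendsto Q' atTop (nhds 0)) :
    IntegrableOn (fun r : ℝ => (2 / r) * ‖Q' r‖ ^ 2) (Ioi 0) ∧
    F (Q 0) = (∫ r in Ioi (0:ℝ), (2 / r) * ‖Q' r‖ ^ 2) ∧
    0 < F (Q 0) := by
  set g : ℝ → ℝ := fun r => (2 / r) * ‖Q' r‖ ^ 2
  have hF0 : F 0 = 0 := by simpa using hhom 0 le_rfl 0
  have hE : ∀ r ∈ Ioi 0, HasDerivAt (energy F Q Q') (-g r) r := fun r hr =>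
    hasDerivAt_energy (hQd r hr) (hQd' r hr) (hF.differentiable (by norm_num) _) (hode r hr)
  have hg : ∀ r ∈ Ioi 0, 0 ≤ g r := fun r (hr : 0 < r) => by positivity
  have hQ0 : Tendsto Q (𝓝[>] 0) (𝓝 (Q 0)) :=
    (hQc 0 self_mem_Ici).tendsto.mono_left (nhdsWithin_mono 0 Ioi_subset_Ici_self)
  obtain ⟨hint, hval⟩ := integrableOn_Ioi_and_integral_eq_of_hasDerivAt_neg hE hg
    (tendsto_energy hF.continuous.continuousAt hQ0 hQ'0)
    (tendsto_energy hF.continuous.continuousAt hQinf hQ'inf)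
  rw [hF0, sub_zero] at hval
  obtain ⟨r, hr, hQ'r⟩ : ∃ r ∈ Ioi 0, Q' r ≠ 0 := by
    by_contra! h
    exact hnc ⟨Q 0, eq_of_hasDerivAt_zero_of_continuousOn_Ici hQc fun r hr => h r hr ▸ hQd r hr⟩
  have hgc : ContinuousOn g (Ioi 0) :=
    (continuousOn_const.div continuousOn_id fun x hx => ne_of_gt hx).mul
      (ContinuousOn.pow (fun x hx => (hQd' x hx).continuousAt.continuousWithinAt.norm) 2)
  have hgr : 0 < g r := mul_pos (div_pos two_pos hr) (pow_pos (norm_pos_iff.2 hQ'r) 2)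
  exact ⟨hint, hval.symm, hval ▸ setIntegral_pos_of_continuousOn isOpen_Ioi hgc hint hg hr hgr⟩

/-- First assertion of Proposition 3.11: the potential `F` is strictly positive at the
central value `Q(0)` of a nontrivial decaying radial stationary solution. -/
theorem stmt7 (m : ℕ) (hm : 1 ≤ m)
    (F : EuclideanSpace ℝ (Fin m) → ℝ) (hF : ContDiff ℝ 3 F)
    (hhom : ∀ c : ℝ, 0 ≤ c → ∀ x, F (c • x) = c ^ 6 * F x)
    (Q Q' Q'' : ℝ → EuclideanSpace ℝ (Fin m))
    (hQc : ContinuousOn Q (Ici 0))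
    (hQd : ∀ r : ℝ, 0 < r → HasDerivAt Q (Q' r) r)
    (hQd' : ∀ r : ℝ, 0 < r → HasDerivAt Q' (Q'' r) r)
    (hQ'' : ContinuousOn Q'' (Ioi 0))
    (hnc : ¬ ∃ c, ∀ r : ℝ, 0 ≤ r → Q r = c)
    (hode : ∀ r : ℝ, 0 < r → Q'' r + (2 / r) • Q' r + gradient F (Q r) = 0)
    (hQ'0 : Tendsto Q' (nhdsWithin 0 (Ioi 0)) (nhds 0))
    (hQinf : Tendsto Q atTop (nhds 0))
    (hQ'inf : Tendsto Q' atTop (nhds 0)) :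
    IntegrableOn (fun r : ℝ => (2 / r) * ‖Q' r‖ ^ 2) (Ioi 0) ∧
    F (Q 0) = (∫ r in Ioi (0:ℝ), (2 / r) * ‖Q' r‖ ^ 2) ∧
    0 < F (Q 0) :=
  stmt7_general m F hF hhom Q Q' Q'' hQc hQd hQd' hnc hode hQ'0 hQinf hQ'inf
end

section
/- Let m ≥ 1, let F : ℝ^m → ℝ be C³ and homogeneous of degree 6, and set f = ∇F. Let Q : [0, ∞) → ℝ^m be continuous on [0, ∞), C² on (0, ∞), not constant, satisfying Q''(r) + (2/r) Q'(r) + f(Q(r)) = 0 on (0, ∞) and lim_{r→0+} Q'(r) = 0. Suppose there exist θ ∈ ℝ^m, C > 0 and R > 0 such that |Q(r) − θ/r| ≤ C r^{−3} and |Q'(r) + θ/r²| ≤ C r^{−4} for all r ≥ R. Then θ ≠ 0 and F(θ) > 0. -/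
/-!
Pass to the Kelvin transform `v t = t⁻¹ • Q t⁻¹`. Since `F` has the critical degree `6` in
dimension `3`, `v` solves the same radial equation, so its energy `‖v'‖ ^ 2 / 2 + F v` is
nonincreasing in `t`. In the variable `s = t⁻¹` this energy tends to `F 0 = 0` as `s → 0` and,
by the asymptotics of `Q`, to `F θ` as `s → ∞`; hence `F θ ≥ 0`. If `F θ = 0` the energy is
constant, so `v' ≡ 0`: then `s • Q s` is constant, equal to its value `0` at `s = 0`, and
`Q ≡ 0`.
-/

open Set Filter Topology InnerProductSpace

section Monotone

variable {β : Type*} [Preorder β] [TopologicalSpace β] [OrderClosedTopology β]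
  {f : ℝ → β} {a s : ℝ} {l : β}

theorem MonotoneOn.le_of_tendsto_nhdsGT (hf : MonotoneOn f (Ioi a)) (h : Tendsto f (𝓝[>] a) (𝓝 l))
    (hs : a < s) : l ≤ f s :=
  le_of_tendsto h <| by
    filter_upwards [Ioo_mem_nhdsGT hs] with t ht using hf ht.1 hs ht.2.le

theorem MonotoneOn.le_of_tendsto_atTop (hf : MonotoneOn f (Ioi a)) (h : Tendsto f atTop (𝓝 l))
    (hs : a < s) : f s ≤ l :=
  ge_of_tendsto h <| by
    filter_upwards [eventually_ge_atTop s] with t ht using hf hs (hs.trans_le ht) ht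

end Monotone

noncomputable section

variable {E : Type*} [NormedAddCommGroup E] [InnerProductSpace ℝ E]

theorem gradient_smul_of_homogeneous [CompleteSpace E] {F : E → ℝ} {n : ℕ} {c : ℝ} (hc : c ≠ 0)
    (hF : ∀ x, F (c • x) = c ^ (n + 1) * F x) (x : E) :
    gradient F (c • x) = c ^ n • gradient F x := by
  have hFc : (F <| c • ·) = c ^ (n + 1) • F := funext hF
  have h : c • fderiv ℝ F (c • x) = c • c ^ n • fderiv ℝ F x := by
    rw [← fderiv_comp_smul, hFc, fderiv_const_smul_field, Pi.smul_apply, smul_smul, pow_succ']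
  rw [gradient, gradient, smul_right_injective _ hc h, map_smul]

/-- For the Kelvin transform `v t = t⁻¹ • Q t⁻¹`, `kelvinVelocity Q Q' s = -v' s⁻¹` and
`kelvinEnergy F Q Q' s = ‖v' t‖ ^ 2 / 2 + F (v t)` at `t = s⁻¹`. -/
def kelvinVelocity (Q Q' : ℝ → E) (s : ℝ) : E := s ^ 2 • Q s + s ^ 3 • Q' s

def kelvinEnergy (F : E → ℝ) (Q Q' : ℝ → E) (s : ℝ) : ℝ :=
  ‖kelvinVelocity Q Q' s‖ ^ 2 / 2 + F (s • Q s)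

variable {F : E → ℝ} {Q Q' : ℝ → E}

theorem kelvinVelocity_eq_sq_smul (s : ℝ) : kelvinVelocity Q Q' s = s ^ 2 • (Q s + s • Q' s) := by
  rw [kelvinVelocity, smul_add, smul_smul, ← pow_succ]

theorem hasDerivAt_smul_self {s : ℝ} (hQ : HasDerivAt Q (Q' s) s) :
    HasDerivAt (fun t => t • Q t) (Q s + s • Q' s) s :=
  ((hasDerivAt_id s).smul hQ).congr_deriv (by rw [one_smul, add_comm]; rfl)

theorem hasDerivAt_kelvinEnergy [CompleteSpace E] {q'' : E} {s : ℝ} (hs : s ≠ 0)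
    (hF : DifferentiableAt ℝ F (s • Q s)) (hgrad : gradient F (s • Q s) = s ^ 5 • gradient F (Q s))
    (hQ : HasDerivAt Q (Q' s) s) (hQ' : HasDerivAt Q' q'' s)
    (hode : q'' + (2 / s) • Q' s + gradient F (Q s) = 0) :
    HasDerivAt (kelvinEnergy F Q Q') (2 / s * ‖kelvinVelocity Q Q' s‖ ^ 2) s := by
  have hq'' : q'' = -(2 / s) • Q' s - gradient F (Q s) := by
    rw [← sub_eq_zero, ← hode]; module
  have hu : HasDerivAt (kelvinVelocity Q Q')
      ((2 / s) • kelvinVelocity Q Q' s - s ^ 3 • gradient F (Q s)) s := by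
    refine (((hasDerivAt_pow 2 s).smul hQ).add ((hasDerivAt_pow 3 s).smul hQ')).congr_deriv ?_
    rw [hq'', kelvinVelocity]
    match_scalars <;> field_simp <;> ring
  have hFv := hF.hasGradientAt.hasFDerivAt.comp_hasDerivAt s (hasDerivAt_smul_self hQ)
  refine ((hu.norm_sq.div_const 2).add hFv).congr_deriv ?_
  rw [← real_inner_self_eq_norm_sq]
  simp only [toDual_apply_apply, hgrad, inner_sub_right, inner_smul_right, inner_smul_left,
    kelvinVelocity_eq_sq_smul, RCLike.conj_to_real, real_inner_comm (Q s + s • Q' s)]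
  field_simp
  ring

theorem monotoneOn_kelvinEnergy
    (hW : ∀ s, 0 < s → HasDerivAt (kelvinEnergy F Q Q') (2 / s * ‖kelvinVelocity Q Q' s‖ ^ 2) s) :
    MonotoneOn (kelvinEnergy F Q Q') (Ioi 0) := by
  refine monotoneOn_of_hasDerivWithinAt_nonneg (f' := fun s => 2 / s * ‖kelvinVelocity Q Q' s‖ ^ 2)
    (convex_Ioi 0)
    (fun s hs => (hW s hs).continuousAt.continuousWithinAt) (fun s hs => ?_) (fun s hs => ?_)
  all_goals rw [interior_Ioi] at hs
  · exact (hW s hs).hasDerivWithinAt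
  · have : (0 : ℝ) < s := hs
    positivity

theorem tendsto_kelvinEnergy {l : Filter ℝ} {a : E} (hF : ContinuousAt F a)
    (hv : Tendsto (fun s => s • Q s) l (𝓝 a)) (hu : Tendsto (kelvinVelocity Q Q') l (𝓝 0)) :
    Tendsto (kelvinEnergy F Q Q') l (𝓝 (F a)) := by
  convert ((hu.norm.pow 2).div_const 2).add (hF.tendsto.comp hv) using 2
  · rfl
  · simp

theorem tendsto_smul_self_nhdsGT_zero (hQ : ContinuousWithinAt Q (Ici 0) 0) :
    Tendsto (fun s => s • Q s) (𝓝[>] 0) (𝓝 0) := by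
  simpa using (tendsto_nhdsWithin_of_tendsto_nhds tendsto_id).smul
    (hQ.tendsto.mono_left (nhdsWithin_mono _ Ioi_subset_Ici_self))

theorem tendsto_kelvinVelocity_nhdsGT_zero (hQ : ContinuousWithinAt Q (Ici 0) 0)
    (hQ' : Tendsto Q' (𝓝[>] 0) (𝓝 0)) : Tendsto (kelvinVelocity Q Q') (𝓝[>] 0) (𝓝 0) := by
  have hs : Tendsto (fun s : ℝ => s) (𝓝[>] 0) (𝓝 0) := tendsto_nhdsWithin_of_tendsto_nhds tendsto_id
  convert (hs.smul (tendsto_smul_self_nhdsGT_zero hQ)).add ((hs.pow 3).smul hQ') using 1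
  · ext s
    rw [kelvinVelocity, pow_two, mul_smul]
  · simp

variable {θ : E} {C R : ℝ}

theorem tendsto_smul_self_atTop (h : ∀ r, R ≤ r → ‖Q r - r⁻¹ • θ‖ ≤ C / r ^ 3) :
    Tendsto (fun s => s • Q s) atTop (𝓝 θ) := by
  rw [tendsto_iff_norm_sub_tendsto_zero]
  refine squeeze_zero' (.of_forall fun _ => norm_nonneg _) ?_
    (tendsto_const_nhds.div_atTop (tendsto_pow_atTop two_ne_zero) : Tendsto (C / · ^ 2) _ _)
  filter_upwards [eventually_ge_atTop (max R 1)] with s hs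
  have hs0 : 0 < s := zero_lt_one.trans_le ((le_max_right _ _).trans hs)
  calc ‖s • Q s - θ‖ = s * ‖Q s - s⁻¹ • θ‖ := by
        rw [← norm_smul_of_nonneg hs0.le, smul_sub, smul_inv_smul₀ hs0.ne']
    _ ≤ s * (C / s ^ 3) := by gcongr; exact h s ((le_max_left _ _).trans hs)
    _ = C / s ^ 2 := by field_simp

theorem tendsto_kelvinVelocity_atTop (h : ∀ r, R ≤ r → ‖Q r - r⁻¹ • θ‖ ≤ C / r ^ 3)
    (h' : ∀ r, R ≤ r → ‖Q' r + (r ^ 2)⁻¹ • θ‖ ≤ C / r ^ 4) :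
    Tendsto (kelvinVelocity Q Q') atTop (𝓝 0) := by
  rw [tendsto_zero_iff_norm_tendsto_zero]
  refine squeeze_zero' (.of_forall fun _ => norm_nonneg _) ?_
    (tendsto_const_nhds.div_atTop tendsto_id : Tendsto (2 * C / ·) _ _)
  filter_upwards [eventually_ge_atTop (max R 1)] with s hs
  have hs0 : 0 < s := zero_lt_one.trans_le ((le_max_right _ _).trans hs)
  have hsR : R ≤ s := (le_max_left _ _).trans hs
  have hsplit : kelvinVelocity Q Q' s
      = s ^ 2 • (Q s - s⁻¹ • θ) + s ^ 3 • (Q' s + (s ^ 2)⁻¹ • θ) := by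
    rw [kelvinVelocity]
    match_scalars <;> field_simp
    ring
  calc ‖kelvinVelocity Q Q' s‖
      ≤ s ^ 2 * ‖Q s - s⁻¹ • θ‖ + s ^ 3 * ‖Q' s + (s ^ 2)⁻¹ • θ‖ := by
        rw [hsplit, ← norm_smul_of_nonneg (by positivity), ← norm_smul_of_nonneg (by positivity)]
        exact norm_add_le _ _
    _ ≤ s ^ 2 * (C / s ^ 3) + s ^ 3 * (C / s ^ 4) := by gcongr <;> [exact h s hsR; exact h' s hsR]
    _ = 2 * C / s := by field_simp; ring

theorem eqOn_zero_of_kelvinVelocity_eq_zero (hQc : ContinuousOn Q (Ici 0))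
    (hQd : ∀ r, 0 < r → HasDerivAt Q (Q' r) r) (hu : ∀ s, 0 < s → kelvinVelocity Q Q' s = 0) :
    EqOn Q 0 (Ici 0) := by
  set g : ℝ → E := fun t => t • Q t
  have hg' : ∀ s, 0 < s → HasDerivAt g 0 s := fun s hs => by
    have h := hu s hs
    rw [kelvinVelocity_eq_sq_smul, smul_eq_zero, or_iff_right (pow_ne_zero 2 hs.ne')] at h
    exact h ▸ hasDerivAt_smul_self (hQd s hs)
  have hg : EqOn g (fun _ => g 1) (Ioi 0) := fun s hs =>
    isOpen_Ioi.is_const_of_deriv_eq_zero isPreconnected_Ioi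
      (fun t ht => (hg' t ht).differentiableAt.differentiableWithinAt)
      (fun t ht => (hg' t ht).deriv) hs (mem_Ioi.mpr one_pos)
  have hg1 : g 1 = 0 := by
    have := hg.of_subset_closure (continuousOn_id.smul hQc) continuousOn_const Ioi_subset_Ici_self
      (closure_Ioi 0).ge self_mem_Ici
    simpa [g] using this.symm
  have hQ : EqOn Q 0 (Ioi 0) := fun s hs => by
    simpa [g, hg1, (mem_Ioi.mp hs).ne'] using hg hs
  exact hQ.of_subset_closure hQc continuousOn_const Ioi_subset_Ici_self (closure_Ioi 0).ge

end

theorem stmt8_general (m : ℕ)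
    (F : EuclideanSpace ℝ (Fin m) → ℝ) (hF : ContDiff ℝ 3 F)
    (hhom : ∀ c : ℝ, 0 ≤ c → ∀ x, F (c • x) = c ^ 6 * F x)
    (Q Q' Q'' : ℝ → EuclideanSpace ℝ (Fin m))
    (hQc : ContinuousOn Q (Ici 0))
    (hQd : ∀ r : ℝ, 0 < r → HasDerivAt Q (Q' r) r)
    (hQd' : ∀ r : ℝ, 0 < r → HasDerivAt Q' (Q'' r) r)
    (hnc : ¬ ∃ c, ∀ r : ℝ, 0 ≤ r → Q r = c)
    (hode : ∀ r : ℝ, 0 < r → Q'' r + (2 / r) • Q' r + gradient F (Q r) = 0)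
    (hQ'0 : Tendsto Q' (nhdsWithin 0 (Ioi 0)) (nhds 0))
    (θ : EuclideanSpace ℝ (Fin m)) (C R : ℝ)
    (hasym : ∀ r : ℝ, R ≤ r → ‖Q r - r⁻¹ • θ‖ ≤ C / r ^ 3)
    (hasym' : ∀ r : ℝ, R ≤ r → ‖Q' r + (r ^ 2)⁻¹ • θ‖ ≤ C / r ^ 4) :
    θ ≠ 0 ∧ 0 < F θ := by
  have hF0 : F 0 = 0 := by simpa using hhom 0 le_rfl 0
  have hW : ∀ s, 0 < s →
      HasDerivAt (kelvinEnergy F Q Q') (2 / s * ‖kelvinVelocity Q Q' s‖ ^ 2) s := fun s hs =>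
    hasDerivAt_kelvinEnergy hs.ne' (hF.differentiable (by norm_num) _)
      (gradient_smul_of_homogeneous hs.ne' (hhom s hs.le) _) (hQd s hs) (hQd' s hs) (hode s hs)
  have hmono := monotoneOn_kelvinEnergy hW
  have hQ0 : ContinuousWithinAt Q (Ici 0) 0 := hQc 0 self_mem_Ici
  have hlow : ∀ s, 0 < s → 0 ≤ kelvinEnergy F Q Q' s := fun s hs =>
    hF0 ▸ hmono.le_of_tendsto_nhdsGT (tendsto_kelvinEnergy hF.continuous.continuousAt
      (tendsto_smul_self_nhdsGT_zero hQ0) (tendsto_kelvinVelocity_nhdsGT_zero hQ0 hQ'0)) hs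
  have hup : ∀ s, 0 < s → kelvinEnergy F Q Q' s ≤ F θ := fun s hs =>
    hmono.le_of_tendsto_atTop (tendsto_kelvinEnergy hF.continuous.continuousAt
      (tendsto_smul_self_atTop hasym) (tendsto_kelvinVelocity_atTop hasym hasym')) hs
  have hpos : 0 < F θ := by
    refine ((hlow 1 one_pos).trans (hup 1 one_pos)).lt_of_ne fun hθ =>
      hnc ⟨0, fun r hr => eqOn_zero_of_kelvinVelocity_eq_zero hQc hQd (fun s hs => ?_) hr⟩
    have hW0 : kelvinEnergy F Q Q' =ᶠ[𝓝 s] fun _ => 0 := by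
      filter_upwards [Ioi_mem_nhds hs] with t ht
      exact le_antisymm (hθ ▸ hup t ht) (hlow t ht)
    simpa [hs.ne'] using (hW s hs).unique ((hasDerivAt_const s 0).congr_of_eventuallyEq hW0)
  exact ⟨by rintro rfl; exact hpos.ne' hF0, hpos⟩

/-- Second assertion of Proposition 3.11: the asymptotic profile `θ` of a nontrivial
radial stationary solution satisfies `θ ≠ 0` and `F(θ) > 0`. -/
theorem stmt8 (m : ℕ) (hm : 1 ≤ m)
    (F : EuclideanSpace ℝ (Fin m) → ℝ) (hF : ContDiff ℝ 3 F)
    (hhom : ∀ c : ℝ, 0 ≤ c → ∀ x, F (c • x) = c ^ 6 * F x)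
    (Q Q' Q'' : ℝ → EuclideanSpace ℝ (Fin m))
    (hQc : ContinuousOn Q (Ici 0))
    (hQd : ∀ r : ℝ, 0 < r → HasDerivAt Q (Q' r) r)
    (hQd' : ∀ r : ℝ, 0 < r → HasDerivAt Q' (Q'' r) r)
    (hQ'' : ContinuousOn Q'' (Ioi 0))
    (hnc : ¬ ∃ c, ∀ r : ℝ, 0 ≤ r → Q r = c)
    (hode : ∀ r : ℝ, 0 < r → Q'' r + (2 / r) • Q' r + gradient F (Q r) = 0)
    (hQ'0 : Tendsto Q' (nhdsWithin 0 (Ioi 0)) (nhds 0))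
    (θ : EuclideanSpace ℝ (Fin m)) (C R : ℝ) (hC : 0 < C) (hR : 0 < R)
    (hasym : ∀ r : ℝ, R ≤ r → ‖Q r - r⁻¹ • θ‖ ≤ C / r ^ 3)
    (hasym' : ∀ r : ℝ, R ≤ r → ‖Q' r + (r ^ 2)⁻¹ • θ‖ ≤ C / r ^ 4) :
    θ ≠ 0 ∧ 0 < F θ :=
  stmt8_general m F hF hhom Q Q' Q'' hQc hQd hQd' hnc hode hQ'0 θ C R hasym hasym'
end

section
/- Let m ≥ 1 and let f : ℝ^m → ℝ^m be C² and homogeneous of degree 5. Let ω ∈ ℝ^m, ω ≠ 0, be a defocusing direction for f, i.e. (f(u)·ω)(u·ω) ≤ 0 for every u ∈ ℝ^m. Let u : (0, ∞) → ℝ^m be a C² solution of u''(r) + (2/r) u'(r) + f(u(r)) = 0 such that ∫_0^1 |u'(r)|² r² dr < ∞, and such that for some θ ∈ ℝ^m, lim_{r→∞} r·u(r) = θ and lim_{r→∞} r² u'(r) = −θ. Then ω · θ = 0. -/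
open Set Filter MeasureTheory Topology
open scoped RealInnerProductSpace

/-!
Write `h = ⟪u, ω⟫`. By the ODE, `Q r = r² h h'` has derivative `r² h'² - r² ⟪f u, ω⟫ h ≥ 0`, so the
defocusing condition makes `Q` nondecreasing on `(0, ∞)`. If `Q r₀ = -c < 0`, then `h² - 2c/r` is
nonincreasing on `(0, r₀]`, so `h ε ^ 2 ≥ 2c/ε - O(1)`; on the other hand finite energy near `0`
bounds `∫_ε^ρ |h'|` through `|h'| ≤ t s² h'²/2 + 1/(2 t s²)`, which for the right `t` forces
`h ε ^ 2 ≤ c/(2ε) + O(1)`. Hence `Q ≥ 0`, and `r Q r = (r h)(r² h') → -⟪θ, ω⟫²` gives `⟪θ, ω⟫ = 0`.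
-/

theorem exists_mem_Ioc_intervalIntegral_le {f : ℝ → ℝ} {r δ : ℝ} (hr : 0 < r) (hδ : 0 < δ)
    (hf : IntervalIntegrable f volume 0 r) : ∃ ρ ∈ Ioc 0 r, ∫ s in 0..ρ, f s ≤ δ := by
  have hcont := intervalIntegral.continuousOn_primitive_interval' hf left_mem_uIcc 0 left_mem_uIcc
  have hlim : Tendsto (fun ρ => ∫ s in 0..ρ, f s) (𝓝[>] 0) (𝓝 0) := by
    rw [← nhdsWithin_Ioc_eq_nhdsGT hr]
    simpa using (hcont.mono (Ioc_subset_Icc_self.trans_eq (uIcc_of_le hr.le).symm)).tendsto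
  have hmem : ∀ᶠ ρ in 𝓝[>] (0 : ℝ), ρ ∈ Ioc 0 r := Ioc_mem_nhdsGT hr
  exact (hmem.and (hlim.eventually_le_const hδ)).exists

section RadialScalar

variable {h h' : ℝ → ℝ}

theorem sq_sub_div_le_of_sq_mul_mul_deriv_le {c ε ρ : ℝ} (hε : 0 < ε)
    (hερ : ε ≤ ρ) (hderiv : ∀ s ∈ Icc ε ρ, HasDerivAt h (h' s) s)
    (hneg : ∀ s ∈ Icc ε ρ, s ^ 2 * (h s * h' s) ≤ -c) :
    h ρ ^ 2 - 2 * c / ρ ≤ h ε ^ 2 - 2 * c / ε := by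
  have hpos : ∀ s ∈ Icc ε ρ, 0 < s := fun s hs => hε.trans_le hs.1
  have hg : ∀ s ∈ Icc ε ρ,
      HasDerivAt (fun s => h s ^ 2 - 2 * c / s) (2 * (h s * h' s) + 2 * c / s ^ 2) s :=
    fun s hs => (((hderiv s hs).fun_pow 2).fun_sub
      ((hasDerivAt_inv (hpos s hs).ne').const_mul (2 * c))).congr_deriv (by ring)
  refine antitoneOn_of_hasDerivWithinAt_nonpos (convex_Icc ε ρ)
    (fun s hs => (hg s hs).continuousAt.continuousWithinAt)
    (fun s hs => (hg s (interior_subset hs)).hasDerivWithinAt) (fun s hs => ?_)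
    ⟨le_rfl, hερ⟩ ⟨hερ, le_rfl⟩ hερ
  replace hs := interior_subset hs
  have : 2 * c / s ^ 2 ≤ -(2 * (h s * h' s)) := by
    rw [div_le_iff₀ (pow_pos (hpos s hs) 2)]
    linarith [hneg s hs]
  linarith

theorem sub_le_mul_integral_sq_mul_deriv_sq {ε ρ t : ℝ} (hε : 0 < ε)
    (hερ : ε ≤ ρ) (ht : 0 < t) (hderiv : ∀ s ∈ Icc ε ρ, HasDerivAt h (h' s) s)
    (hint : IntegrableOn (fun s => s ^ 2 * h' s ^ 2) (Icc ε ρ)) :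
    h ρ - h ε ≤ t / 2 * (∫ s in ε..ρ, s ^ 2 * h' s ^ 2) + (2 * t * ε)⁻¹ := by
  have hpos : ∀ s ∈ Icc ε ρ, 0 < s := fun s hs => hε.trans_le hs.1
  have hg : ∀ s ∈ Icc ε ρ,
      HasDerivAt (fun s => h s + (2 * t * s)⁻¹) (h' s - (2 * t * s ^ 2)⁻¹) s := fun s hs =>
    ((hderiv s hs).fun_add (((hasDerivAt_id s).const_mul (2 * t)).fun_inv
      (by have := hpos s hs; positivity))).congr_deriv (by simp; field_simp; ring)
  have key := intervalIntegral.sub_le_integral_of_hasDeriv_right_of_le hερ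
    (fun s hs => (hg s hs).continuousAt.continuousWithinAt)
    (fun s hs => (hg s (Ioo_subset_Icc_self hs)).hasDerivWithinAt) (hint.const_mul (t / 2))
    (fun s hs => ?_)
  · rw [intervalIntegral.integral_const_mul] at key
    have : 0 ≤ (2 * t * ρ)⁻¹ := by have := hpos ρ ⟨hερ, le_rfl⟩; positivity
    linarith
  · have hs0 := hpos s (Ioo_subset_Icc_self hs)
    -- AM–GM: `h' ≤ t s² h'² / 2 + (2 t s²)⁻¹`, the last term being `-(2 t s)⁻¹`'s derivative
    have : t / 2 * (s ^ 2 * h' s ^ 2) - (h' s - (2 * t * s ^ 2)⁻¹)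
        = (t * s ^ 2 * h' s - 1) ^ 2 / (2 * t * s ^ 2) := by
      field_simp; ring
    have : 0 ≤ (t * s ^ 2 * h' s - 1) ^ 2 / (2 * t * s ^ 2) := by positivity
    linarith

theorem abs_sub_le_mul_integral_sq_mul_deriv_sq {ε ρ t : ℝ} (hε : 0 < ε)
    (hερ : ε ≤ ρ) (ht : 0 < t) (hderiv : ∀ s ∈ Icc ε ρ, HasDerivAt h (h' s) s)
    (hint : IntegrableOn (fun s => s ^ 2 * h' s ^ 2) (Icc ε ρ)) :
    |h ρ - h ε| ≤ t / 2 * (∫ s in ε..ρ, s ^ 2 * h' s ^ 2) + (2 * t * ε)⁻¹ := by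
  have hneg := sub_le_mul_integral_sq_mul_deriv_sq (h := -h) (h' := -h') hε hερ ht
    (fun s hs => (hderiv s hs).neg) (by simpa using hint)
  simp only [Pi.neg_apply, neg_sq] at hneg
  exact abs_sub_le_iff.2 ⟨sub_le_mul_integral_sq_mul_deriv_sq hε hερ ht hderiv hint,
    by linarith⟩

theorem not_integrableOn_sq_mul_deriv_sq {c r : ℝ} (hc : 0 < c) (hr : 0 < r)
    (hderiv : ∀ s ∈ Ioc 0 r, HasDerivAt h (h' s) s)
    (hneg : ∀ s ∈ Ioc 0 r, s ^ 2 * (h s * h' s) ≤ -c) :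
    ¬ IntegrableOn (fun s => s ^ 2 * h' s ^ 2) (Ioc 0 r) := by
  intro hint
  have hint' : IntervalIntegrable (fun s => s ^ 2 * h' s ^ 2) volume 0 r :=
    (intervalIntegrable_iff_integrableOn_Ioc_of_le hr.le).2 hint
  obtain ⟨ρ, ⟨hρ, hρr⟩, hEρ⟩ :=
    exists_mem_Ioc_intervalIntegral_le hr (by linarith : 0 < c / 4) hint'
  set K := h ρ ^ 2 + 2 * c / ρ
  obtain ⟨t, ht, hερ, hK⟩ :
      ∃ t : ℝ, 0 < t ∧ 4 / (c * t ^ 2) ≤ ρ ∧ K < 3 * c ^ 2 * t ^ 2 / 8 := by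
    have hsq : Tendsto (fun t : ℝ => t ^ 2) atTop atTop := tendsto_pow_atTop two_ne_zero
    obtain ⟨t, ht, h1, h2⟩ := ((eventually_gt_atTop 0).and
      ((hsq.eventually_ge_atTop (4 / (c * ρ))).and
        (hsq.eventually_gt_atTop (8 * K / (3 * c ^ 2))))).exists
    rw [div_le_iff₀ (by positivity)] at h1
    rw [div_lt_iff₀ (by positivity)] at h2
    refine ⟨t, ht, ?_, by linarith⟩
    rw [div_le_iff₀ (by positivity)]
    linarith
  -- this choice of `ε` balances the two terms of the bound on `|h ρ - h ε|`
  set ε := 4 / (c * t ^ 2)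
  have hε : 0 < ε := by positivity
  have hsub : Icc ε ρ ⊆ Ioc 0 r := Icc_subset_Ioc hε hρr
  have hlow := sq_sub_div_le_of_sq_mul_mul_deriv_le hε hερ (fun s hs => hderiv s (hsub hs))
    (fun s hs => hneg s (hsub hs))
  have hE : ∫ s in ε..ρ, s ^ 2 * h' s ^ 2 ≤ c / 4 :=
    (intervalIntegral.integral_mono_interval hε.le hερ le_rfl
      (ae_of_all _ fun s => by positivity)
      (hint'.mono_set (by
        rw [uIcc_of_le hρ.le, uIcc_of_le hr.le]; exact Icc_subset_Icc_right hρr))).trans hEρ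
  have hup := abs_sub_le_mul_integral_sq_mul_deriv_sq hε hερ ht
    (fun s hs => hderiv s (hsub hs)) (hint.mono_set hsub)
  have hinv : (2 * t * ε)⁻¹ = c * t / 8 := by simp only [ε]; field_simp; ring
  have h2c : 2 * c / ε = c ^ 2 * t ^ 2 / 2 := by simp only [ε]; field_simp; ring
  have hΔ : |h ρ - h ε| ≤ c * t / 4 := by
    nlinarith [mul_le_mul_of_nonneg_left hE (by positivity : 0 ≤ t / 2)]
  have hΔsq : (h ρ - h ε) ^ 2 ≤ (c * t / 4) ^ 2 := by
    rw [← sq_abs]; exact pow_le_pow_left₀ (abs_nonneg _) hΔ 2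
  nlinarith [sq_nonneg (h ρ + (h ρ - h ε))]

theorem monotoneOn_sq_mul_mul_deriv {h'' F : ℝ → ℝ}
    (hderiv : ∀ r > 0, HasDerivAt h (h' r) r) (hderiv' : ∀ r > 0, HasDerivAt h' (h'' r) r)
    (hode : ∀ r > 0, h'' r + 2 / r * h' r + F r = 0) (hdefoc : ∀ r > 0, F r * h r ≤ 0) :
    MonotoneOn (fun r => r ^ 2 * (h r * h' r)) (Ioi 0) := by
  have hQ : ∀ r > 0, HasDerivAt (fun r => r ^ 2 * (h r * h' r))
      (r ^ 2 * h' r ^ 2 - r ^ 2 * (F r * h r)) r := by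
    intro r hr
    have hh'' : h'' r = -(2 / r * h' r) - F r := by linarith [hode r hr]
    refine ((hasDerivAt_pow 2 r).fun_mul ((hderiv r hr).fun_mul (hderiv' r hr))).congr_deriv ?_
    rw [hh'']
    field_simp
    ring
  refine monotoneOn_of_hasDerivWithinAt_nonneg (convex_Ioi 0)
    (fun r hr => (hQ r hr).continuousAt.continuousWithinAt)
    (fun r hr => (hQ r (interior_subset hr)).hasDerivWithinAt) (fun r hr => ?_)
  rw [interior_Ioi] at hr
  nlinarith [hdefoc r hr, sq_nonneg (r * h' r), sq_nonneg r]

theorem sq_mul_mul_deriv_nonneg (hderiv : ∀ r > 0, HasDerivAt h (h' r) r)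
    (hmono : MonotoneOn (fun r => r ^ 2 * (h r * h' r)) (Ioi 0))
    (henergy : IntegrableOn (fun r => r ^ 2 * h' r ^ 2) (Ioo 0 1)) {r : ℝ} (hr : 0 < r) :
    0 ≤ r ^ 2 * (h r * h' r) := by
  by_contra! hneg
  rw [← integrableOn_Ioc_iff_integrableOn_Ioo] at henergy
  refine not_integrableOn_sq_mul_deriv_sq (neg_pos.2 hneg) (lt_min hr one_pos)
    (fun s hs => hderiv s hs.1) (fun s hs => ?_)
    (henergy.mono_set (Ioc_subset_Ioc_right (min_le_right r 1)))
  rw [neg_neg]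
  exact hmono hs.1 hr (hs.2.trans (min_le_left r 1))

end RadialScalar

theorem integrableOn_sq_mul_inner_sq {E : Type*} [NormedAddCommGroup E] [InnerProductSpace ℝ E]
    {v : ℝ → E} {s : Set ℝ} (hs : MeasurableSet s) (hv : ContinuousOn v s)
    (hint : IntegrableOn (fun r => ‖v r‖ ^ 2 * r ^ 2) s) (ω : E) :
    IntegrableOn (fun r => r ^ 2 * ⟪v r, ω⟫ ^ 2) s := by
  refine (hint.mul_const (‖ω‖ ^ 2)).mono' ?_ (ae_of_all _ fun r => ?_)
  · exact ((continuousOn_id.pow 2).mul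
      ((hv.inner continuousOn_const).pow 2)).aestronglyMeasurable hs
  · rw [Real.norm_eq_abs, abs_of_nonneg (by positivity)]
    have hsq : ⟪v r, ω⟫ ^ 2 ≤ (‖v r‖ * ‖ω‖) ^ 2 := by
      rw [← sq_abs]; exact pow_le_pow_left₀ (abs_nonneg _) (abs_real_inner_le_norm _ _) 2
    nlinarith [mul_le_mul_of_nonneg_left hsq (sq_nonneg r)]

theorem stmt9_general (m : ℕ)
    (f : EuclideanSpace ℝ (Fin m) → EuclideanSpace ℝ (Fin m))
    (ω : EuclideanSpace ℝ (Fin m))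
    (hdefoc : ∀ x : EuclideanSpace ℝ (Fin m), ⟪f x, ω⟫ * ⟪x, ω⟫ ≤ 0)
    (u u' u'' : ℝ → EuclideanSpace ℝ (Fin m))
    (hud : ∀ r : ℝ, 0 < r → HasDerivAt u (u' r) r)
    (hud' : ∀ r : ℝ, 0 < r → HasDerivAt u' (u'' r) r)
    (hode : ∀ r : ℝ, 0 < r → u'' r + (2 / r) • u' r + f (u r) = 0)
    (hH1 : IntegrableOn (fun r : ℝ => ‖u' r‖ ^ 2 * r ^ 2) (Ioo 0 1))
    (θ : EuclideanSpace ℝ (Fin m))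
    (hulim : Tendsto (fun r : ℝ => r • u r) atTop (nhds θ))
    (hu'lim : Tendsto (fun r : ℝ => (r ^ 2) • u' r) atTop (nhds (-θ))) :
    ⟪ω, θ⟫ = 0 := by
  have hderiv : ∀ r > 0, HasDerivAt (fun r => ⟪u r, ω⟫) ⟪u' r, ω⟫ r := fun r hr => by
    simpa using (hud r hr).inner ℝ (hasDerivAt_const r ω)
  have hderiv' : ∀ r > 0, HasDerivAt (fun r => ⟪u' r, ω⟫) ⟪u'' r, ω⟫ r := fun r hr => by
    simpa using (hud' r hr).inner ℝ (hasDerivAt_const r ω)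
  have hode' : ∀ r > 0, ⟪u'' r, ω⟫ + 2 / r * ⟪u' r, ω⟫ + ⟪f (u r), ω⟫ = 0 := fun r hr => by
    simpa only [inner_add_left, real_inner_smul_left, inner_zero_left] using
      congrArg (⟪·, ω⟫) (hode r hr)
  have henergy := integrableOn_sq_mul_inner_sq measurableSet_Ioo
    (fun r hr => (hud' r hr.1).continuousAt.continuousWithinAt) hH1 ω
  have hQ : ∀ r > 0, 0 ≤ r ^ 2 * (⟪u r, ω⟫ * ⟪u' r, ω⟫) := fun r hr =>
    sq_mul_mul_deriv_nonneg hderiv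
      (monotoneOn_sq_mul_mul_deriv hderiv hderiv' hode' fun r _ => hdefoc (u r)) henergy hr
  have hlim : Tendsto (fun r : ℝ => ⟪r • u r, ω⟫ * ⟪r ^ 2 • u' r, ω⟫) atTop
      (𝓝 (⟪θ, ω⟫ * ⟪-θ, ω⟫)) :=
    (hulim.inner tendsto_const_nhds).mul (hu'lim.inner tendsto_const_nhds)
  have hnonneg : 0 ≤ ⟪θ, ω⟫ * ⟪-θ, ω⟫ := by
    refine ge_of_tendsto hlim ?_
    filter_upwards [eventually_gt_atTop 0] with r hr
    rw [real_inner_smul_left, real_inner_smul_left]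
    nlinarith [mul_nonneg hr.le (hQ r hr)]
  rw [inner_neg_left, real_inner_comm ω θ] at hnonneg
  exact mul_self_eq_zero.1 (le_antisymm (by linarith) (mul_self_nonneg _))

/-- Proposition 3.13: the asymptotic profile `θ` of a finite-energy radial stationary
solution is orthogonal to every defocusing direction `ω` of the nonlinearity. -/
theorem stmt9 (m : ℕ) (hm : 1 ≤ m)
    (f : EuclideanSpace ℝ (Fin m) → EuclideanSpace ℝ (Fin m))
    (hf : ContDiff ℝ 2 f)
    (hhom : ∀ c : ℝ, 0 ≤ c → ∀ x, f (c • x) = c ^ 5 • f x)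
    (ω : EuclideanSpace ℝ (Fin m)) (hω : ω ≠ 0)
    (hdefoc : ∀ x : EuclideanSpace ℝ (Fin m), ⟪f x, ω⟫ * ⟪x, ω⟫ ≤ 0)
    (u u' u'' : ℝ → EuclideanSpace ℝ (Fin m))
    (hud : ∀ r : ℝ, 0 < r → HasDerivAt u (u' r) r)
    (hud' : ∀ r : ℝ, 0 < r → HasDerivAt u' (u'' r) r)
    (hu'' : ContinuousOn u'' (Ioi 0))
    (hode : ∀ r : ℝ, 0 < r → u'' r + (2 / r) • u' r + f (u r) = 0)
    (hH1 : IntegrableOn (fun r : ℝ => ‖u' r‖ ^ 2 * r ^ 2) (Ioo 0 1))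
    (θ : EuclideanSpace ℝ (Fin m))
    (hulim : Tendsto (fun r : ℝ => r • u r) atTop (nhds θ))
    (hu'lim : Tendsto (fun r : ℝ => (r ^ 2) • u' r) atTop (nhds (-θ))) :
    ⟪ω, θ⟫ = 0 :=
  stmt9_general m f ω hdefoc u u' u'' hud hud' hode hH1 θ hulim hu'lim
end

section
/- Let m ≥ 1, let F : ℝ^m → ℝ be C¹ and homogeneous of degree 6, and set f = ∇F. Then there exists ζ ∈ ℝ^m with ζ ≠ 0 and f(ζ) = ζ if and only if there exists u ∈ ℝ^m with F(u) > 0. Moreover, if ω ∈ ℝ^m with |ω| = 1 satisfies F(ω) = max_{|u|=1} F(u) and F(ω) > 0, then ζ = (6 F(ω))^{−1/4} ω satisfies f(ζ) = ζ. -/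
/-!
Euler's identity `⟪∇F u, u⟫ = n F(u)` shows that at a nonzero fixed point `ζ = ∇F ζ` one has
`n F(ζ) = ‖ζ‖² > 0`. Conversely, if `F` is positive somewhere, its maximum `F(ω)` over the
(compact) unit sphere is positive, and since `F(u) ≤ ‖u‖ⁿ F(ω)` everywhere with equality at `ω`,
the first-order condition gives `∇F ω = n F(ω) ω`. As `∇F` is homogeneous of degree `n - 1`,
rescaling `ω` by `(n F(ω))^{-1/(n-2)}` turns it into a fixed point.
-/

open InnerProductSpace

section NormedSpace

variable {E : Type*} [NormedAddCommGroup E] [NormedSpace ℝ E]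

def PosHomogeneous (n : ℕ) (F : E → ℝ) : Prop :=
  ∀ c : ℝ, 0 ≤ c → ∀ x, F (c • x) = c ^ n * F x

namespace PosHomogeneous

variable {n : ℕ} {F : E → ℝ}

theorem map_zero (hF : PosHomogeneous n F) (hn : n ≠ 0) : F 0 = 0 := by
  simpa [zero_pow hn] using hF 0 le_rfl 0

theorem fderiv_apply_self (hF : PosHomogeneous n F) {u : E} (hd : DifferentiableAt ℝ F u) :
    fderiv ℝ F u u = n * F u := by
  have hray : HasDerivAt (fun t : ℝ => F (t • u)) (fderiv ℝ F u u) 1 :=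
    hd.hasFDerivAt.comp_hasDerivAt_of_eq (1 : ℝ)
      ((hasDerivAt_id (1 : ℝ)).smul_const u |>.congr_deriv (one_smul ℝ u)) (one_smul ℝ u).symm
  have hpow : HasDerivAt (fun t : ℝ => t ^ n * F u) (n * F u) 1 := by
    simpa using (hasDerivAt_pow n (1 : ℝ)).mul_const (F u)
  have hEq : (fun t : ℝ => t ^ n * F u) =ᶠ[nhds 1] fun t => F (t • u) := by
    filter_upwards [eventually_gt_nhds one_pos] with t ht
    exact (hF t ht.le u).symm
  exact hray.unique (hpow.congr_of_eventuallyEq hEq.symm)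

theorem le_norm_pow_mul (hF : PosHomogeneous n F) (hn : n ≠ 0) {ω : E}
    (hmax : ∀ u : E, ‖u‖ = 1 → F u ≤ F ω) (u : E) : F u ≤ ‖u‖ ^ n * F ω := by
  rcases eq_or_ne u 0 with rfl | hu
  · simp [hF.map_zero hn, zero_pow hn]
  have hnorm : 0 < ‖u‖ := norm_pos_iff.mpr hu
  calc F u = ‖u‖ ^ n * F (‖u‖⁻¹ • u) := by
        rw [← hF _ hnorm.le, smul_inv_smul₀ hnorm.ne']
    _ ≤ ‖u‖ ^ n * F ω := by
        gcongr
        exact hmax _ (norm_smul_inv_norm hu)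

theorem exists_pos_max_on_sphere [ProperSpace E] (hF : PosHomogeneous n F) (hn : n ≠ 0)
    (hc : Continuous F) {u : E} (hu : 0 < F u) :
    ∃ ω : E, ‖ω‖ = 1 ∧ (∀ v : E, ‖v‖ = 1 → F v ≤ F ω) ∧ 0 < F ω := by
  have hu0 : u ≠ 0 := by
    rintro rfl
    exact hu.ne' (hF.map_zero hn)
  obtain ⟨ω, hω, hmax⟩ := (isCompact_sphere (0 : E) 1).exists_isMaxOn
    ⟨‖u‖⁻¹ • u, mem_sphere_zero_iff_norm.mpr (norm_smul_inv_norm hu0)⟩ hc.continuousOn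
  rw [mem_sphere_zero_iff_norm] at hω
  have hmax' : ∀ v : E, ‖v‖ = 1 → F v ≤ F ω := fun v hv => hmax (mem_sphere_zero_iff_norm.mpr hv)
  refine ⟨ω, hω, hmax', ?_⟩
  have := hu.trans_le (hF.le_norm_pow_mul hn hmax' u)
  exact pos_of_mul_pos_right this (by positivity)

end PosHomogeneous

end NormedSpace

section InnerProductSpace

variable {E : Type*} [NormedAddCommGroup E] [InnerProductSpace ℝ E] [CompleteSpace E]

namespace PosHomogeneous

variable {n : ℕ} {F : E → ℝ}

theorem inner_gradient_self (hF : PosHomogeneous n F) {u : E} (hd : DifferentiableAt ℝ F u) :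
    inner ℝ (gradient F u) u = n * F u := by
  rw [inner_gradient_left, hF.fderiv_apply_self hd]

theorem pos_of_gradient_eq_self (hF : PosHomogeneous n F) {ζ : E} (hd : DifferentiableAt ℝ F ζ)
    (hζ : ζ ≠ 0) (hfix : gradient F ζ = ζ) : 0 < F ζ := by
  have hEuler : ‖ζ‖ ^ 2 = n * F ζ := by
    rw [← hF.inner_gradient_self hd, hfix, real_inner_self_eq_norm_sq]
  have : 0 < (n : ℝ) * F ζ := hEuler ▸ by positivity
  exact pos_of_mul_pos_right this n.cast_nonneg

theorem smul_gradient_smul (hF : PosHomogeneous n F) (hd : Differentiable ℝ F) {c : ℝ}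
    (hc : 0 < c) (x : E) : c • gradient F (c • x) = c ^ n • gradient F x := by
  have hcomp : HasFDerivAt (fun y : E => F (c • y)) ((fderiv ℝ F (c • x)).comp (c • .id ℝ E)) x :=
    (hd (c • x)).hasFDerivAt.comp x ((hasFDerivAt_id x).const_smul c)
  have hscaled : HasFDerivAt (fun y : E => F (c • y)) (c ^ n • fderiv ℝ F x) x := by
    simpa only [hF c hc.le] using (hd x).hasFDerivAt.const_mul (c ^ n)
  have hfderiv : c • fderiv ℝ F (c • x) = c ^ n • fderiv ℝ F x := by
    rw [← hcomp.unique hscaled]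
    ext v
    simp
  simpa only [gradient, map_smul] using congrArg (toDual ℝ E).symm hfderiv

/-- Lagrange multiplier rule at a maximizer on the unit sphere: `u ↦ F u - ‖u‖ ^ n * F ω`
attains its global maximum `0` at `ω`. -/
theorem gradient_eq_smul_of_max_on_sphere (hF : PosHomogeneous n F) (hn : 1 < n) {ω : E}
    (hd : DifferentiableAt ℝ F ω) (hω : ‖ω‖ = 1) (hmax : ∀ u : E, ‖u‖ = 1 → F u ≤ F ω) :
    gradient F ω = (n * F ω) • ω := by
  have hnR : (1 : ℝ) < n := by exact_mod_cast hn
  let G : E → ℝ := fun u => F u - ‖u‖ ^ (n : ℝ) * F ω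
  have hGmax : IsLocalMax G ω := Filter.Eventually.of_forall fun u => by
    simpa [G, hω, Real.rpow_natCast] using hF.le_norm_pow_mul (by omega) hmax u
  have hGderiv : HasFDerivAt G
      (fderiv ℝ F ω - F ω • (((n : ℝ) * ‖ω‖ ^ ((n : ℝ) - 2)) • innerSL ℝ ω)) ω :=
    hd.hasFDerivAt.sub ((hasFDerivAt_norm_rpow ω hnR).mul_const (F ω))
  have hfderiv : fderiv ℝ F ω = toDual ℝ E ((n * F ω) • ω) := by
    rw [sub_eq_zero.mp (hGmax.hasFDerivAt_eq_zero hGderiv)]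
    ext y
    simp only [hω, Real.one_rpow, mul_one, smul_apply, coe_innerSL_apply, smul_eq_mul, map_smul,
      toDual_apply_apply]
    ring
  rw [gradient, hfderiv, LinearIsometryEquiv.symm_apply_apply]

theorem gradient_rpow_smul_eq_self (hF : PosHomogeneous n F) (hd : Differentiable ℝ F)
    (hn : 2 < n) {a : ℝ} (ha : 0 < a) {ω : E} (hω : gradient F ω = a • ω) :
    gradient F (a ^ (-1 / ((n : ℝ) - 2)) • ω) = a ^ (-1 / ((n : ℝ) - 2)) • ω := by
  set c := a ^ (-1 / ((n : ℝ) - 2))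
  have hc : 0 < c := Real.rpow_pos_of_pos ha _
  have hn2 : (n : ℝ) - 2 ≠ 0 := sub_ne_zero.mpr (by exact_mod_cast hn.ne')
  have hcn : c ^ n * a = c * c := by
    have hca : c ^ ((n : ℝ) - 2) * a = 1 := by
      rw [← Real.rpow_mul ha.le, div_mul_cancel₀ _ hn2, Real.rpow_neg_one, inv_mul_cancel₀ ha.ne']
    calc c ^ n * a = c ^ ((n : ℝ) - 2 + 2) * a := by rw [sub_add_cancel, Real.rpow_natCast]
      _ = c * c := by rw [Real.rpow_add hc, Real.rpow_two, mul_right_comm, hca]; ring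
  apply smul_right_injective E hc.ne'
  simp only [hF.smul_gradient_smul hd hc, hω, smul_smul, hcn]

end PosHomogeneous

end InnerProductSpace

theorem stmt11_general (m : ℕ)
    (F : EuclideanSpace ℝ (Fin m) → ℝ) (hF : ContDiff ℝ 1 F)
    (hhom : ∀ c : ℝ, 0 ≤ c → ∀ x, F (c • x) = c ^ 6 * F x) :
    ((∃ ζ : EuclideanSpace ℝ (Fin m), ζ ≠ 0 ∧ gradient F ζ = ζ) ↔
      ∃ u : EuclideanSpace ℝ (Fin m), 0 < F u) ∧
    ∀ ω : EuclideanSpace ℝ (Fin m), ‖ω‖ = 1 →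
      (∀ u : EuclideanSpace ℝ (Fin m), ‖u‖ = 1 → F u ≤ F ω) → 0 < F ω →
      gradient F (((6 * F ω) ^ (-(1:ℝ)/4)) • ω) = ((6 * F ω) ^ (-(1:ℝ)/4)) • ω := by
  have hF6 : PosHomogeneous 6 F := hhom
  have hd : Differentiable ℝ F := hF.differentiable one_ne_zero
  have fixed_of_max : ∀ ω : EuclideanSpace ℝ (Fin m), ‖ω‖ = 1 →
      (∀ u : EuclideanSpace ℝ (Fin m), ‖u‖ = 1 → F u ≤ F ω) → 0 < F ω →
      gradient F (((6 * F ω) ^ (-(1:ℝ)/4)) • ω) = ((6 * F ω) ^ (-(1:ℝ)/4)) • ω := by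
    intro ω hω hmax hpos
    have hexp : -(1 : ℝ) / 4 = -1 / (((6 : ℕ) : ℝ) - 2) := by norm_num
    rw [hexp]
    exact hF6.gradient_rpow_smul_eq_self hd (by norm_num) (by positivity)
      (hF6.gradient_eq_smul_of_max_on_sphere (by norm_num) (hd ω) hω hmax)
  refine ⟨⟨fun ⟨ζ, hζ, hfix⟩ => ⟨ζ, hF6.pos_of_gradient_eq_self (hd ζ) hζ hfix⟩, ?_⟩, fixed_of_max⟩
  rintro ⟨u, hu⟩
  obtain ⟨ω, hω, hmax, hpos⟩ := hF6.exists_pos_max_on_sphere (by norm_num) hF.continuous hu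
  exact ⟨_, smul_ne_zero (by positivity) (norm_ne_zero_iff.mp (by simp [hω])),
    fixed_of_max ω hω hmax hpos⟩

/-- Finite-dimensional core of Proposition 3.9: for `f = ∇F` with `F` homogeneous of
degree 6, a nonzero fixed point `f(ζ) = ζ` exists iff `F` takes a positive value;
moreover a maximizer `ω` of `F` on the unit sphere with `F(ω) > 0` yields the fixed
point `ζ = (6F(ω))^{-1/4} ω`. -/
theorem stmt11 (m : ℕ) (hm : 1 ≤ m)
    (F : EuclideanSpace ℝ (Fin m) → ℝ) (hF : ContDiff ℝ 1 F)
    (hhom : ∀ c : ℝ, 0 ≤ c → ∀ x, F (c • x) = c ^ 6 * F x) :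
    ((∃ ζ : EuclideanSpace ℝ (Fin m), ζ ≠ 0 ∧ gradient F ζ = ζ) ↔
      ∃ u : EuclideanSpace ℝ (Fin m), 0 < F u) ∧
    ∀ ω : EuclideanSpace ℝ (Fin m), ‖ω‖ = 1 →
      (∀ u : EuclideanSpace ℝ (Fin m), ‖u‖ = 1 → F u ≤ F ω) → 0 < F ω →
      gradient F (((6 * F ω) ^ (-(1:ℝ)/4)) • ω) = ((6 * F ω) ^ (-(1:ℝ)/4)) • ω :=
  stmt11_general m F hF hhom
end

section
/- Let m ≥ 1 and let F : ℝ^m → ℝ be C¹ and homogeneous of degree 6. Then for every integer J ≥ 1 there exists a constant C > 0 (depending on F and J) such that for all z₁, …, z_J ∈ ℝ^m, |F(z₁ + ⋯ + z_J) − (F(z₁) + ⋯ + F(z_J))| ≤ C Σ_{j ≠ k} |z_j| |z_k|^5. -/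
/-!
Pick the largest vector `z j₀`, of norm `M`, and let `T = ∑_{j ≠ j₀} ‖z j‖`. Rescaling the ball of
radius `R` to the unit ball, where `‖F'‖ ≤ B`, the mean value inequality and homogeneity of degree
`n + 1` give `|F x - F y| ≤ B R ^ n ‖x - y‖` there. Comparing `F (∑ j, z j)` with `F (z j₀)`
costs `B (J M) ^ n T`, and each remaining `|F (z j)| = |F (z j) - F 0|` costs `B M ^ n ‖z j‖`.
Both are multiples of `T M ^ n`, which is one column of the off-diagonal sum.
-/

open Finset Metric

def IsPosHomogeneous {E : Type*} [AddCommGroup E] [Module ℝ E] (F : E → ℝ) (d : ℕ) : Prop :=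
  ∀ c : ℝ, 0 ≤ c → ∀ x, F (c • x) = c ^ d * F x

theorem sum_erase_mul_pow_le_sum_sum_ite_ne {ι : Type*} [Fintype ι] [DecidableEq ι]
    {w : ι → ℝ} (hw : ∀ j, 0 ≤ w j) (j₀ : ι) (n : ℕ) :
    (∑ j ∈ univ.erase j₀, w j) * w j₀ ^ n ≤
      ∑ j, ∑ k, if j ≠ k then w j * w k ^ n else 0 :=
  calc (∑ j ∈ univ.erase j₀, w j) * w j₀ ^ n
      = ∑ j, if j ≠ j₀ then w j * w j₀ ^ n else 0 := by
        rw [sum_mul, ← sum_filter, filter_ne']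
    _ ≤ ∑ j, ∑ k, if j ≠ k then w j * w k ^ n else 0 :=
        sum_le_sum fun j _ => single_le_sum (f := fun k => if j ≠ k then w j * w k ^ n else 0)
          (fun k _ => by split_ifs <;> positivity [hw j, hw k]) (mem_univ j₀)

section Decoupling

variable {E : Type*} [NormedAddCommGroup E]

theorem abs_map_sum_sub_sum_le {ι : Type*} [Fintype ι] [DecidableEq ι] {F : E → ℝ} {B : ℝ}
    {n : ℕ} (hB : 0 ≤ B) (h0 : F 0 = 0)
    (hF : ∀ R x y, ‖x‖ ≤ R → ‖y‖ ≤ R → |F x - F y| ≤ B * R ^ n * ‖x - y‖) (z : ι → E) :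
    |F (∑ j, z j) - ∑ j, F (z j)| ≤
      B * (Fintype.card ι ^ n + 1) * ∑ j, ∑ k, if j ≠ k then ‖z j‖ * ‖z k‖ ^ n else 0 := by
  rcases isEmpty_or_nonempty ι with _ | _
  · simp [h0]
  obtain ⟨j₀, -, hj₀⟩ := univ.exists_max_image (fun j => ‖z j‖) univ_nonempty
  set M := ‖z j₀‖
  set T := ∑ j ∈ univ.erase j₀, ‖z j‖
  have hM : ∀ j, ‖z j‖ ≤ M := fun j => hj₀ j (mem_univ j)
  have hcard : (1 : ℝ) ≤ Fintype.card ι := by exact_mod_cast Fintype.card_pos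
  have hlead : |F (∑ j, z j) - F (z j₀)| ≤ B * Fintype.card ι ^ n * (T * M ^ n) := by
    have hsum : ‖∑ j, z j‖ ≤ Fintype.card ι * M :=
      calc ‖∑ j, z j‖ ≤ ∑ j, ‖z j‖ := norm_sum_le _ _
        _ ≤ ∑ _j : ι, M := sum_le_sum fun j _ => hM j
        _ = Fintype.card ι * M := by simp
    have hdiff : ‖∑ j, z j - z j₀‖ ≤ T := by
      rw [← add_sum_erase _ _ (mem_univ j₀), add_sub_cancel_left]
      exact norm_sum_le _ _
    calc |F (∑ j, z j) - F (z j₀)|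
        ≤ B * (Fintype.card ι * M) ^ n * ‖∑ j, z j - z j₀‖ :=
          hF _ _ _ hsum (le_mul_of_one_le_left (norm_nonneg _) hcard)
      _ ≤ B * (Fintype.card ι * M) ^ n * T := by gcongr
      _ = B * Fintype.card ι ^ n * (T * M ^ n) := by ring
  have hrest : |∑ j ∈ univ.erase j₀, F (z j)| ≤ B * (T * M ^ n) :=
    calc |∑ j ∈ univ.erase j₀, F (z j)| ≤ ∑ j ∈ univ.erase j₀, |F (z j)| :=
          abs_sum_le_sum_abs _ _
      _ ≤ ∑ j ∈ univ.erase j₀, B * (‖z j‖ * M ^ n) := by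
          gcongr with j
          have h := hF M (z j) 0 (hM j) (by simp [M])
          rw [h0, sub_zero, sub_zero] at h
          linarith
      _ = B * (T * M ^ n) := by rw [← mul_sum, ← sum_mul]
  calc |F (∑ j, z j) - ∑ j, F (z j)|
      = |(F (∑ j, z j) - F (z j₀)) - ∑ j ∈ univ.erase j₀, F (z j)| := by
        rw [← add_sum_erase _ (fun j => F (z j)) (mem_univ j₀), sub_add_eq_sub_sub]
    _ ≤ |F (∑ j, z j) - F (z j₀)| + |∑ j ∈ univ.erase j₀, F (z j)| := abs_sub _ _
    _ ≤ B * Fintype.card ι ^ n * (T * M ^ n) + B * (T * M ^ n) := add_le_add hlead hrest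
    _ = B * (Fintype.card ι ^ n + 1) * (T * M ^ n) := by ring
    _ ≤ B * (Fintype.card ι ^ n + 1) * ∑ j, ∑ k, if j ≠ k then ‖z j‖ * ‖z k‖ ^ n else 0 := by
        gcongr
        exact sum_erase_mul_pow_le_sum_sum_ite_ne (fun j => norm_nonneg (z j)) j₀ n

variable [NormedSpace ℝ E]

namespace IsPosHomogeneous

variable {F : E → ℝ} {n : ℕ}

theorem map_zero (hF : IsPosHomogeneous F (n + 1)) : F 0 = 0 := by
  simpa using hF 0 le_rfl 0

theorem eq_pow_mul_map_inv_smul {d : ℕ} (hF : IsPosHomogeneous F d) {R : ℝ} (hR : 0 < R)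
    (x : E) : F x = R ^ d * F (R⁻¹ • x) := by
  conv_lhs => rw [← smul_inv_smul₀ hR.ne' x]
  exact hF R hR.le _

theorem abs_sub_le (hF : IsPosHomogeneous F (n + 1)) (hdiff : Differentiable ℝ F) {B : ℝ}
    (hB : ∀ u ∈ closedBall (0 : E) 1, ‖fderiv ℝ F u‖ ≤ B) {R : ℝ} {x y : E}
    (hx : ‖x‖ ≤ R) (hy : ‖y‖ ≤ R) : |F x - F y| ≤ B * R ^ n * ‖x - y‖ := by
  rcases ((norm_nonneg x).trans hx).eq_or_lt with rfl | hR
  · simp [norm_le_zero_iff.mp hx, norm_le_zero_iff.mp hy]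
  have hball : ∀ v : E, ‖v‖ ≤ R → R⁻¹ • v ∈ closedBall (0 : E) 1 := fun v hv => by
    rw [mem_closedBall_zero_iff, norm_smul, norm_inv, Real.norm_of_nonneg hR.le]
    exact inv_mul_le_one_of_le₀ hv hR.le
  have hmvt : ‖F (R⁻¹ • x) - F (R⁻¹ • y)‖ ≤ B * ‖R⁻¹ • x - R⁻¹ • y‖ :=
    (convex_closedBall (0 : E) 1).norm_image_sub_le_of_norm_fderiv_le
      (fun u _ => hdiff u) hB (hball y hy) (hball x hx)
  rw [← smul_sub, norm_smul, norm_inv, Real.norm_of_nonneg hR.le, Real.norm_eq_abs] at hmvt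
  calc |F x - F y| = R ^ (n + 1) * |F (R⁻¹ • x) - F (R⁻¹ • y)| := by
        rw [hF.eq_pow_mul_map_inv_smul hR x, hF.eq_pow_mul_map_inv_smul hR y, ← mul_sub,
          abs_mul, abs_of_pos (by positivity)]
    _ ≤ R ^ (n + 1) * (B * (R⁻¹ * ‖x - y‖)) := by gcongr
    _ = B * R ^ n * ‖x - y‖ := by field_simp; ring

theorem exists_abs_map_sum_sub_sum_le [ProperSpace E] (hF : IsPosHomogeneous F (n + 1))
    (hC1 : ContDiff ℝ 1 F) (ι : Type*) [Fintype ι] [DecidableEq ι] :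
    ∃ C : ℝ, 0 < C ∧ ∀ z : ι → E,
      |F (∑ j, z j) - ∑ j, F (z j)| ≤
        C * ∑ j, ∑ k, if j ≠ k then ‖z j‖ * ‖z k‖ ^ n else 0 := by
  obtain ⟨B, hB⟩ := (isCompact_closedBall (0 : E) 1).exists_bound_of_continuousOn
    (hC1.continuous_fderiv one_ne_zero).continuousOn
  have hB' : ∀ u ∈ closedBall (0 : E) 1, ‖fderiv ℝ F u‖ ≤ max B 1 :=
    fun u hu => (hB u hu).trans (le_max_left _ _)
  exact ⟨max B 1 * (Fintype.card ι ^ n + 1), by positivity,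
    abs_map_sum_sub_sum_le (by positivity) hF.map_zero
      fun _ _ _ hx hy => hF.abs_sub_le (hC1.differentiable one_ne_zero) hB' hx hy⟩

end IsPosHomogeneous

end Decoupling

theorem stmt16_general (m : ℕ)
    (F : EuclideanSpace ℝ (Fin m) → ℝ)
    (hF : ContDiff ℝ 1 F)
    (hhom : ∀ c : ℝ, 0 ≤ c → ∀ x, F (c • x) = c ^ 6 * F x) :
    ∀ J : ℕ, 1 ≤ J → ∃ C : ℝ, 0 < C ∧
      ∀ z : Fin J → EuclideanSpace ℝ (Fin m),
        |F (∑ j, z j) - ∑ j, F (z j)|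
          ≤ C * ∑ j : Fin J, ∑ k : Fin J, if j ≠ k then ‖z j‖ * ‖z k‖ ^ 5 else 0 :=
  fun J _ => IsPosHomogeneous.exists_abs_map_sum_sub_sum_le (n := 5) hhom hF (Fin J)

/-- Decoupling estimate for a potential homogeneous of degree 6. -/
theorem stmt16 (m : ℕ) (hm : 1 ≤ m)
    (F : EuclideanSpace ℝ (Fin m) → ℝ)
    (hF : ContDiff ℝ 1 F)
    (hhom : ∀ c : ℝ, 0 ≤ c → ∀ x, F (c • x) = c ^ 6 * F x) :
    ∀ J : ℕ, 1 ≤ J → ∃ C : ℝ, 0 < C ∧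
      ∀ z : Fin J → EuclideanSpace ℝ (Fin m),
        |F (∑ j, z j) - ∑ j, F (z j)|
          ≤ C * ∑ j : Fin J, ∑ k : Fin J, if j ≠ k then ‖z j‖ * ‖z k‖ ^ 5 else 0 :=
  stmt16_general m F hF hhom
end
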